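/- arXiv:2209.14718 — 5 statements merged into one kernel-verified Lean document; each statement's English description precedes it below -/
import Mathlib

section
/- Let H and A be Hopf quasigroups over a field F and let Ψ : H⊗A → A⊗H be an a-comonoidal distributive law of H over A. Then the wreath product A⊗_Ψ H, i.e. the vector space A⊗H with unit η_A⊗η_H, product (μ_A⊗μ_H)∘(A⊗Ψ⊗H), counit ε_A⊗ε_H, coproduct δ_{A⊗H} = (A⊗c_{A,H}⊗H)∘(δ_A⊗δ_H) and antipode Ψ∘(λ_H⊗λ_A)∘c_{A,H}, is a Hopf quasigroup. -/
open TensorProduct LinearMap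

noncomputable section

universe u

/-- A Hopf quasigroup structure on an `F`-module `H`. -/
structure HopfQG (F : Type u) [Field F] (H : Type u) [AddCommGroup H] [Module F H] where
  eta : F →ₗ[F] H
  mu : H ⊗[F] H →ₗ[F] H
  eps : H →ₗ[F] F
  delta : H →ₗ[F] H ⊗[F] H
  lam : H →ₗ[F] H
  mul_one : mu ∘ₗ lTensor H eta ∘ₗ (TensorProduct.rid F H).symm.toLinearMap = LinearMap.id
  one_mul : mu ∘ₗ rTensor H eta ∘ₗ (TensorProduct.lid F H).symm.toLinearMap = LinearMap.id
  counit_left : (TensorProduct.lid F H).toLinearMap ∘ₗ rTensor H eps ∘ₗ delta = LinearMap.id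
  counit_right : (TensorProduct.rid F H).toLinearMap ∘ₗ lTensor H eps ∘ₗ delta = LinearMap.id
  coassoc : (TensorProduct.assoc F H H H).toLinearMap ∘ₗ rTensor H delta ∘ₗ delta
      = lTensor H delta ∘ₗ delta
  eps_eta : eps ∘ₗ eta = LinearMap.id
  eps_mu : eps ∘ₗ mu = (TensorProduct.lid F F).toLinearMap ∘ₗ TensorProduct.map eps eps
  delta_eta : delta ∘ₗ eta
      = TensorProduct.map eta eta ∘ₗ (TensorProduct.lid F F).symm.toLinearMap
  delta_mu : delta ∘ₗ mu
      = TensorProduct.map mu mu ∘ₗ (TensorProduct.tensorTensorTensorComm F H H H H).toLinearMap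
          ∘ₗ TensorProduct.map delta delta
  antipode_l1 : mu ∘ₗ TensorProduct.map lam mu ∘ₗ (TensorProduct.assoc F H H H).toLinearMap
        ∘ₗ rTensor H delta
      = (TensorProduct.lid F H).toLinearMap ∘ₗ rTensor H eps
  antipode_l2 : mu ∘ₗ lTensor H mu ∘ₗ lTensor H (rTensor H lam)
        ∘ₗ (TensorProduct.assoc F H H H).toLinearMap ∘ₗ rTensor H delta
      = (TensorProduct.lid F H).toLinearMap ∘ₗ rTensor H eps
  antipode_r1 : mu ∘ₗ rTensor H mu ∘ₗ (TensorProduct.assoc F H H H).symm.toLinearMap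
        ∘ₗ lTensor H (rTensor H lam) ∘ₗ lTensor H delta
      = (TensorProduct.rid F H).toLinearMap ∘ₗ lTensor H eps
  antipode_r2 : mu ∘ₗ TensorProduct.map mu lam ∘ₗ (TensorProduct.assoc F H H H).symm.toLinearMap
        ∘ₗ lTensor H delta
      = (TensorProduct.rid F H).toLinearMap ∘ₗ lTensor H eps

section QGDefs

variable (F : Type u) [Field F]
variable {H : Type u} [AddCommGroup H] [Module F H]
variable {A : Type u} [AddCommGroup A] [Module F A]
variable {X : Type u} [AddCommGroup X] [Module F X]

/-- The tensor-product coproduct `δ_{H⊗A} = (H⊗c_{H,A}⊗A)∘(δ_H⊗δ_A)`. -/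
def tensorDelta (dH : H →ₗ[F] H ⊗[F] H) (dA : A →ₗ[F] A ⊗[F] A) :
    H ⊗[F] A →ₗ[F] (H ⊗[F] A) ⊗[F] (H ⊗[F] A) :=
  (TensorProduct.tensorTensorTensorComm F H H A A).toLinearMap ∘ₗ TensorProduct.map dH dA

/-- The tensor-product counit `ε_H⊗ε_A`. -/
def tensorEps (eH : H →ₗ[F] F) (eA : A →ₗ[F] F) : H ⊗[F] A →ₗ[F] F :=
  (TensorProduct.lid F F).toLinearMap ∘ₗ TensorProduct.map eH eA

/-- The tensor-product unit `η_H⊗η_A`. -/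
def tensorEta (uH : F →ₗ[F] H) (uA : F →ₗ[F] A) : F →ₗ[F] H ⊗[F] A :=
  TensorProduct.map uH uA ∘ₗ (TensorProduct.lid F F).symm.toLinearMap

/-- The tensor-product multiplication `(μ_H⊗μ_A)∘(H⊗c_{A,H}⊗A)`. -/
def tensorMu (mH : H ⊗[F] H →ₗ[F] H) (mA : A ⊗[F] A →ₗ[F] A) :
    (H ⊗[F] A) ⊗[F] (H ⊗[F] A) →ₗ[F] H ⊗[F] A :=
  TensorProduct.map mH mA ∘ₗ (TensorProduct.tensorTensorTensorComm F H A H A).toLinearMap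

/-- `Ψ : H⊗A → A⊗H` is a distributive law of the Hopf quasigroup `H` over `A`. -/
def IsDistLaw (QH : HopfQG F H) (QA : HopfQG F A) (Ψ : H ⊗[F] A →ₗ[F] A ⊗[F] H) : Prop :=
  (Ψ ∘ₗ lTensor H QA.mu ∘ₗ TensorProduct.map QH.lam (rTensor A QA.lam)
      = rTensor H QA.mu ∘ₗ (TensorProduct.assoc F A A H).symm.toLinearMap
        ∘ₗ lTensor A Ψ ∘ₗ (TensorProduct.assoc F A H A).toLinearMap
        ∘ₗ rTensor A Ψ ∘ₗ (TensorProduct.assoc F H A A).symm.toLinearMap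
        ∘ₗ TensorProduct.map QH.lam (rTensor A QA.lam))
  ∧ (Ψ ∘ₗ rTensor A QH.mu ∘ₗ TensorProduct.map (lTensor H QH.lam) QA.lam
      = lTensor A QH.mu ∘ₗ (TensorProduct.assoc F A H H).toLinearMap
        ∘ₗ rTensor H Ψ ∘ₗ (TensorProduct.assoc F H A H).symm.toLinearMap
        ∘ₗ lTensor H Ψ ∘ₗ (TensorProduct.assoc F H H A).toLinearMap
        ∘ₗ TensorProduct.map (lTensor H QH.lam) QA.lam)
  ∧ (Ψ ∘ₗ lTensor H QA.eta ∘ₗ (TensorProduct.rid F H).symm.toLinearMap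
      = rTensor H QA.eta ∘ₗ (TensorProduct.lid F H).symm.toLinearMap)
  ∧ (Ψ ∘ₗ rTensor A QH.eta ∘ₗ (TensorProduct.lid F A).symm.toLinearMap
      = lTensor A QH.eta ∘ₗ (TensorProduct.rid F A).symm.toLinearMap)

/-- `Ψ` is a comonoidal distributive law of `H` over `A`. -/
def IsComonoidalDL (QH : HopfQG F H) (QA : HopfQG F A) (Ψ : H ⊗[F] A →ₗ[F] A ⊗[F] H) : Prop :=
  IsDistLaw F QH QA Ψ
  ∧ (tensorDelta F QA.delta QH.delta ∘ₗ Ψ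
      = TensorProduct.map Ψ Ψ ∘ₗ tensorDelta F QH.delta QA.delta)
  ∧ (tensorEps F QA.eps QH.eps ∘ₗ Ψ = tensorEps F QH.eps QA.eps)

/-- `Ψ` is an a-comonoidal distributive law of `H` over `A`. -/
def IsAComonoidalDL (QH : HopfQG F H) (QA : HopfQG F A) (Ψ : H ⊗[F] A →ₗ[F] A ⊗[F] H) : Prop :=
  IsComonoidalDL F QH QA Ψ
  ∧ (lTensor A QH.mu ∘ₗ (TensorProduct.assoc F A H H).toLinearMap
        ∘ₗ TensorProduct.map Ψ QH.mu
        ∘ₗ (TensorProduct.assoc F H A (H ⊗[F] H)).symm.toLinearMap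
        ∘ₗ lTensor H (TensorProduct.assoc F A H H).toLinearMap
        ∘ₗ lTensor H (rTensor H Ψ)
        ∘ₗ lTensor H (TensorProduct.assoc F H A H).symm.toLinearMap
        ∘ₗ (TensorProduct.assoc F H H (A ⊗[F] H)).toLinearMap
        ∘ₗ rTensor (A ⊗[F] H) (rTensor H QH.lam ∘ₗ QH.delta)
      = (TensorProduct.lid F (A ⊗[F] H)).toLinearMap ∘ₗ rTensor (A ⊗[F] H) QH.eps)
  ∧ (lTensor A QH.mu ∘ₗ (TensorProduct.assoc F A H H).toLinearMap
        ∘ₗ TensorProduct.map Ψ QH.mu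
        ∘ₗ (TensorProduct.assoc F H A (H ⊗[F] H)).symm.toLinearMap
        ∘ₗ lTensor H (TensorProduct.assoc F A H H).toLinearMap
        ∘ₗ lTensor H (rTensor H Ψ)
        ∘ₗ lTensor H (TensorProduct.assoc F H A H).symm.toLinearMap
        ∘ₗ (TensorProduct.assoc F H H (A ⊗[F] H)).toLinearMap
        ∘ₗ rTensor (A ⊗[F] H) (lTensor H QH.lam ∘ₗ QH.delta)
      = (TensorProduct.lid F (A ⊗[F] H)).toLinearMap ∘ₗ rTensor (A ⊗[F] H) QH.eps)
  ∧ (rTensor H QA.mu ∘ₗ (TensorProduct.assoc F A A H).symm.toLinearMap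
        ∘ₗ TensorProduct.map QA.mu Ψ
        ∘ₗ (TensorProduct.assoc F A A (H ⊗[F] A)).symm.toLinearMap
        ∘ₗ lTensor A (TensorProduct.assoc F A H A).toLinearMap
        ∘ₗ lTensor A (rTensor A Ψ)
        ∘ₗ lTensor A (TensorProduct.assoc F H A A).symm.toLinearMap
        ∘ₗ (TensorProduct.assoc F A H (A ⊗[F] A)).toLinearMap
        ∘ₗ lTensor (A ⊗[F] H) (rTensor A QA.lam ∘ₗ QA.delta)
      = (TensorProduct.rid F (A ⊗[F] H)).toLinearMap ∘ₗ lTensor (A ⊗[F] H) QA.eps)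
  ∧ (rTensor H QA.mu ∘ₗ (TensorProduct.assoc F A A H).symm.toLinearMap
        ∘ₗ TensorProduct.map QA.mu Ψ
        ∘ₗ (TensorProduct.assoc F A A (H ⊗[F] A)).symm.toLinearMap
        ∘ₗ lTensor A (TensorProduct.assoc F A H A).toLinearMap
        ∘ₗ lTensor A (rTensor A Ψ)
        ∘ₗ lTensor A (TensorProduct.assoc F H A A).symm.toLinearMap
        ∘ₗ (TensorProduct.assoc F A H (A ⊗[F] A)).toLinearMap
        ∘ₗ lTensor (A ⊗[F] H) (lTensor A QA.lam ∘ₗ QA.delta)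
      = (TensorProduct.rid F (A ⊗[F] H)).toLinearMap ∘ₗ lTensor (A ⊗[F] H) QA.eps)

/-- The wreath product multiplication `(μ_A⊗μ_H)∘(A⊗Ψ⊗H)` on `A⊗H`. -/
def wreathMul (QA : HopfQG F A) (QH : HopfQG F H) (Ψ : H ⊗[F] A →ₗ[F] A ⊗[F] H) :
    (A ⊗[F] H) ⊗[F] (A ⊗[F] H) →ₗ[F] A ⊗[F] H :=
  TensorProduct.map QA.mu QH.mu ∘ₗ (TensorProduct.assoc F A A (H ⊗[F] H)).symm.toLinearMap
    ∘ₗ lTensor A ((TensorProduct.assoc F A H H).toLinearMap ∘ₗ rTensor H Ψ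
        ∘ₗ (TensorProduct.assoc F H A H).symm.toLinearMap)
    ∘ₗ (TensorProduct.assoc F A H (A ⊗[F] H)).toLinearMap

/-- The wreath product antipode `Ψ∘(λ_H⊗λ_A)∘c_{A,H}`. -/
def wreathLam (QA : HopfQG F A) (QH : HopfQG F H) (Ψ : H ⊗[F] A →ₗ[F] A ⊗[F] H) :
    A ⊗[F] H →ₗ[F] A ⊗[F] H :=
  Ψ ∘ₗ TensorProduct.map QH.lam QA.lam ∘ₗ (TensorProduct.comm F A H).toLinearMap

/-- `f` is a morphism of Hopf quasigroups. -/
def IsHopfQGMor (Q1 : HopfQG F H) (Q2 : HopfQG F X) (f : H →ₗ[F] X) : Prop :=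
  f ∘ₗ Q1.eta = Q2.eta
  ∧ f ∘ₗ Q1.mu = Q2.mu ∘ₗ TensorProduct.map f f
  ∧ Q2.eps ∘ₗ f = Q1.eps
  ∧ TensorProduct.map f f ∘ₗ Q1.delta = Q2.delta ∘ₗ f

/-- `ω_X = μ_X∘(i_A⊗i_H)`. -/
def omegaMap (QX : HopfQG F X) (iA : A →ₗ[F] X) (iH : H →ₗ[F] X) : A ⊗[F] H →ₗ[F] X :=
  QX.mu ∘ₗ TensorProduct.map iA iH

/-- `θ_X = μ_X∘(i_H⊗i_A)`. -/
def thetaMap (QX : HopfQG F X) (iH : H →ₗ[F] X) (iA : A →ₗ[F] X) : H ⊗[F] A →ₗ[F] X :=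
  QX.mu ∘ₗ TensorProduct.map iH iA

/-- `X` factorizes as `X = AH`. -/
def Factorizes (QX : HopfQG F X) (QH : HopfQG F H) (QA : HopfQG F A)
    (iH : H →ₗ[F] X) (iA : A →ₗ[F] X) : Prop :=
  Function.Bijective (omegaMap F QX iA iH)
  ∧ (QX.mu ∘ₗ rTensor X (omegaMap F QX iA iH)
      = QX.mu ∘ₗ TensorProduct.map iA (QX.mu ∘ₗ rTensor X iH)
          ∘ₗ (TensorProduct.assoc F A H X).toLinearMap)
  ∧ (QX.mu ∘ₗ lTensor X (omegaMap F QX iA iH)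
      = QX.mu ∘ₗ TensorProduct.map (QX.mu ∘ₗ lTensor X iA) iH
          ∘ₗ (TensorProduct.assoc F X A H).symm.toLinearMap)
  ∧ (QX.mu ∘ₗ rTensor X (thetaMap F QX iH iA ∘ₗ TensorProduct.map QH.lam QA.lam)
      = QX.mu ∘ₗ TensorProduct.map (iH ∘ₗ QH.lam) (QX.mu ∘ₗ rTensor X (iA ∘ₗ QA.lam))
          ∘ₗ (TensorProduct.assoc F H A X).toLinearMap)
  ∧ (QX.mu ∘ₗ lTensor X (thetaMap F QX iH iA ∘ₗ TensorProduct.map QH.lam QA.lam)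
      = QX.mu ∘ₗ TensorProduct.map (QX.mu ∘ₗ lTensor X (iH ∘ₗ QH.lam)) (iA ∘ₗ QA.lam)
          ∘ₗ (TensorProduct.assoc F X H A).symm.toLinearMap)

end QGDefs


/-!
Write `m · c` and `k · m` for the products in `A ⊗_Ψ H` with `c ⊗ 1` on the right and with
`1 ⊗ k` on the left. The two distributive-law axioms say precisely that products with images of
the wreath antipode `λ(a ⊗ h) = Ψ(λh ⊗ λa)` reassociate:
`Ψ(λx ⊗ λy) · m = λx · (λy m)` and `m · Ψ(λx ⊗ λy) = (m λx) · λy`.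
Expanding the coproduct of `a ⊗ h`, each antipode axiom of the wreath product therefore becomes
two one-sided cancellations in Sweedler sums: an antipode axiom of `A` or of `H` acting on one
tensor factor, and one of the four a-comonoidality conditions, which say that `k · -` and
`- · c` cancel against their antipodes. The coalgebra axioms are those of the tensor product
coalgebra, and the multiplicativity of `δ` and `ε` comes from the comonoidality of `Ψ`.
-/

namespace HopfQG

variable {F : Type u} [Field F] {A : Type u} [AddCommGroup A] [Module F A] (Q : HopfQG F A)

@[simp]
lemma mu_eta_right (a : A) : Q.mu (a ⊗ₜ Q.eta 1) = a := by
  simpa using LinearMap.congr_fun Q.mul_one a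

@[simp]
lemma mu_eta_left (a : A) : Q.mu (Q.eta 1 ⊗ₜ a) = a := by
  simpa using LinearMap.congr_fun Q.one_mul a

@[simp]
lemma eps_eta_one : Q.eps (Q.eta 1) = 1 := by
  simpa using LinearMap.congr_fun Q.eps_eta 1

@[simp]
lemma delta_eta_one : Q.delta (Q.eta 1) = Q.eta 1 ⊗ₜ Q.eta 1 := by
  simpa using LinearMap.congr_fun Q.delta_eta 1

@[simp]
lemma eps_mu_tmul (x y : A) : Q.eps (Q.mu (x ⊗ₜ y)) = Q.eps x * Q.eps y := by
  simpa using LinearMap.congr_fun Q.eps_mu (x ⊗ₜ y)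

lemma delta_mu_tmul (x y : A) :
    Q.delta (Q.mu (x ⊗ₜ y))
      = map Q.mu Q.mu (tensorTensorTensorComm F A A A A (Q.delta x ⊗ₜ Q.delta y)) := by
  simpa using LinearMap.congr_fun Q.delta_mu (x ⊗ₜ y)

abbrev toCoalgebra : Coalgebra F A where
  comul := Q.delta
  counit := Q.eps
  coassoc := Q.coassoc
  rTensor_counit_comp_comul := by
    ext a
    simpa using congr_arg (TensorProduct.lid F A).symm (LinearMap.congr_fun Q.counit_left a)
  lTensor_counit_comp_comul := by
    ext a
    simpa using congr_arg (TensorProduct.rid F A).symm (LinearMap.congr_fun Q.counit_right a)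

section TensorFactor
variable (M : Type*) [AddCommGroup M] [Module F M]

def mulLeftTensor : A ⊗[F] (A ⊗[F] M) →ₗ[F] A ⊗[F] M :=
  rTensor M Q.mu ∘ₗ (TensorProduct.assoc F A A M).symm.toLinearMap

def mulRightTensor : (M ⊗[F] A) ⊗[F] A →ₗ[F] M ⊗[F] A :=
  lTensor M Q.mu ∘ₗ (TensorProduct.assoc F M A A).toLinearMap

variable {M}

@[simp]
lemma mulLeftTensor_tmul (a x : A) (m : M) :
    Q.mulLeftTensor M (a ⊗ₜ (x ⊗ₜ m)) = Q.mu (a ⊗ₜ x) ⊗ₜ m := rfl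

@[simp]
lemma mulRightTensor_tmul (m : M) (x a : A) :
    Q.mulRightTensor M ((m ⊗ₜ x) ⊗ₜ a) = m ⊗ₜ Q.mu (x ⊗ₜ a) := rfl

lemma mulLeftTensor_lam_mulLeftTensor (a : A) (w : A ⊗[F] M) :
    Q.mulLeftTensor M (lTensor A (Q.mulLeftTensor M)
        (TensorProduct.assoc F A A (A ⊗[F] M) (rTensor A Q.lam (Q.delta a) ⊗ₜ w)))
      = Q.eps a • w := by
  induction w using TensorProduct.induction_on with
  | zero => simp
  | add w₁ w₂ h₁ h₂ => simp_all [tmul_add]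
  | tmul c m =>
    have h := LinearMap.congr_fun Q.antipode_l1 (a ⊗ₜ c)
    simp only [coe_comp, LinearEquiv.coe_coe, Function.comp_apply, rTensor_tmul,
      lid_tmul] at h
    rw [smul_tmul', ← h]
    hopf_tensor_induction Q.delta a with a₁ a₂
    simp

lemma mulLeftTensor_mulLeftTensor_lam (a : A) (w : A ⊗[F] M) :
    Q.mulLeftTensor M (lTensor A (Q.mulLeftTensor M)
        (TensorProduct.assoc F A A (A ⊗[F] M) (lTensor A Q.lam (Q.delta a) ⊗ₜ w)))
      = Q.eps a • w := by
  induction w using TensorProduct.induction_on with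
  | zero => simp
  | add w₁ w₂ h₁ h₂ => simp_all [tmul_add]
  | tmul c m =>
    have h := LinearMap.congr_fun Q.antipode_l2 (a ⊗ₜ c)
    simp only [coe_comp, LinearEquiv.coe_coe, Function.comp_apply, rTensor_tmul,
      lid_tmul] at h
    rw [smul_tmul', ← h]
    hopf_tensor_induction Q.delta a with a₁ a₂
    simp

lemma mulRightTensor_mulRightTensor_lam (a : A) (w : M ⊗[F] A) :
    Q.mulRightTensor M (rTensor A (Q.mulRightTensor M)
        ((TensorProduct.assoc F (M ⊗[F] A) A A).symm (w ⊗ₜ rTensor A Q.lam (Q.delta a))))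
      = Q.eps a • w := by
  induction w using TensorProduct.induction_on with
  | zero => simp
  | add w₁ w₂ h₁ h₂ => simp_all [add_tmul]
  | tmul m c =>
    have h := LinearMap.congr_fun Q.antipode_r1 (c ⊗ₜ a)
    simp only [coe_comp, LinearEquiv.coe_coe, Function.comp_apply, lTensor_tmul,
      rid_tmul] at h
    rw [← tmul_smul, ← h]
    hopf_tensor_induction Q.delta a with a₁ a₂
    simp

lemma mulRightTensor_lam_mulRightTensor (a : A) (w : M ⊗[F] A) :
    Q.mulRightTensor M (rTensor A (Q.mulRightTensor M)
        ((TensorProduct.assoc F (M ⊗[F] A) A A).symm (w ⊗ₜ lTensor A Q.lam (Q.delta a))))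
      = Q.eps a • w := by
  induction w using TensorProduct.induction_on with
  | zero => simp
  | add w₁ w₂ h₁ h₂ => simp_all [add_tmul]
  | tmul m c =>
    have h := LinearMap.congr_fun Q.antipode_r2 (c ⊗ₜ a)
    simp only [coe_comp, LinearEquiv.coe_coe, Function.comp_apply, lTensor_tmul,
      rid_tmul] at h
    rw [← tmul_smul, ← h]
    hopf_tensor_induction Q.delta a with a₁ a₂
    simp

lemma mulLeftTensor_mulRightTensor {H : Type u} [AddCommGroup H] [Module F H] (QH : HopfQG F H)
    (a : A) (w : A ⊗[F] H) (g : H) :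
    Q.mulLeftTensor H (a ⊗ₜ QH.mulRightTensor A (w ⊗ₜ g))
      = QH.mulRightTensor A (Q.mulLeftTensor H (a ⊗ₜ w) ⊗ₜ g) := by
  induction w using TensorProduct.induction_on <;> simp_all [tmul_add, add_tmul]

end TensorFactor

section

variable {M : Type u} [AddCommGroup M] [Module F M]

lemma tensorEps_mulLeftTensor (e : M →ₗ[F] F) (a : A) (w : A ⊗[F] M) :
    tensorEps F Q.eps e (Q.mulLeftTensor M (a ⊗ₜ w)) = Q.eps a * tensorEps F Q.eps e w := by
  induction w using TensorProduct.induction_on with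
  | zero => simp
  | add w₁ w₂ h₁ h₂ => simp_all [tmul_add, mul_add]
  | tmul x m => simp [tensorEps, mul_assoc]

lemma tensorEps_mulRightTensor (e : M →ₗ[F] F) (w : M ⊗[F] A) (a : A) :
    tensorEps F e Q.eps (Q.mulRightTensor M (w ⊗ₜ a)) = tensorEps F e Q.eps w * Q.eps a := by
  induction w using TensorProduct.induction_on with
  | zero => simp
  | add w₁ w₂ h₁ h₂ => simp_all [add_tmul, add_mul]
  | tmul m x => simp [tensorEps, mul_assoc]

lemma tensorDelta_mulLeftTensor (d : M →ₗ[F] M ⊗[F] M) (a : A) (w : A ⊗[F] M) :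
    tensorDelta F Q.delta d (Q.mulLeftTensor M (a ⊗ₜ w))
      = map (Q.mulLeftTensor M) (Q.mulLeftTensor M)
          (tensorTensorTensorComm F A A (A ⊗[F] M) (A ⊗[F] M)
            (Q.delta a ⊗ₜ tensorDelta F Q.delta d w)) := by
  induction w using TensorProduct.induction_on with
  | zero => simp
  | add w₁ w₂ h₁ h₂ => simp_all [tmul_add]
  | tmul x m =>
    simp only [mulLeftTensor_tmul, tensorDelta, coe_comp, LinearEquiv.coe_coe,
      Function.comp_apply, map_tmul, delta_mu_tmul]
    hopf_tensor_induction Q.delta a with a₁ a₂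
    hopf_tensor_induction Q.delta x with x₁ x₂
    hopf_tensor_induction d m with m₁ m₂
    simp

lemma tensorDelta_mulRightTensor (d : M →ₗ[F] M ⊗[F] M) (w : M ⊗[F] A) (a : A) :
    tensorDelta F d Q.delta (Q.mulRightTensor M (w ⊗ₜ a))
      = map (Q.mulRightTensor M) (Q.mulRightTensor M)
          (tensorTensorTensorComm F (M ⊗[F] A) (M ⊗[F] A) A A
            (tensorDelta F d Q.delta w ⊗ₜ Q.delta a)) := by
  induction w using TensorProduct.induction_on with
  | zero => simp
  | add w₁ w₂ h₁ h₂ => simp_all [add_tmul]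
  | tmul m x =>
    simp only [mulRightTensor_tmul, tensorDelta, coe_comp, LinearEquiv.coe_coe,
      Function.comp_apply, map_tmul, delta_mu_tmul]
    hopf_tensor_induction d m with m₁ m₂
    hopf_tensor_induction Q.delta x with x₁ x₂
    hopf_tensor_induction Q.delta a with a₁ a₂
    simp

end

end HopfQG

section TensorCoalgebra

variable {F : Type u} [Field F] {A H : Type u} [AddCommGroup A] [Module F A]
  [AddCommGroup H] [Module F H] (QA : HopfQG F A) (QH : HopfQG F H)

lemma tensorDelta_eq_comul :
    letI := QA.toCoalgebra; letI := QH.toCoalgebra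
    tensorDelta F QA.delta QH.delta = Coalgebra.comul (R := F) (A := A ⊗[F] H) := by
  ext; rfl

lemma tensorEps_eq_counit :
    letI := QA.toCoalgebra; letI := QH.toCoalgebra
    tensorEps F QA.eps QH.eps = Coalgebra.counit (R := F) (A := A ⊗[F] H) := by
  ext; simp [tensorEps, mul_comm]; rfl

lemma tensorDelta_counit_left :
    (TensorProduct.lid F (A ⊗[F] H)).toLinearMap
        ∘ₗ rTensor (A ⊗[F] H) (tensorEps F QA.eps QH.eps)
        ∘ₗ tensorDelta F QA.delta QH.delta = LinearMap.id := by
  let _ := QA.toCoalgebra; let _ := QH.toCoalgebra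
  rw [tensorDelta_eq_comul, tensorEps_eq_counit, Coalgebra.rTensor_counit_comp_comul]
  ext; simp

lemma tensorDelta_counit_right :
    (TensorProduct.rid F (A ⊗[F] H)).toLinearMap
        ∘ₗ lTensor (A ⊗[F] H) (tensorEps F QA.eps QH.eps)
        ∘ₗ tensorDelta F QA.delta QH.delta = LinearMap.id := by
  let _ := QA.toCoalgebra; let _ := QH.toCoalgebra
  rw [tensorDelta_eq_comul, tensorEps_eq_counit, Coalgebra.lTensor_counit_comp_comul]
  ext; simp

lemma tensorDelta_coassoc :
    (TensorProduct.assoc F (A ⊗[F] H) (A ⊗[F] H) (A ⊗[F] H)).toLinearMap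
        ∘ₗ rTensor (A ⊗[F] H) (tensorDelta F QA.delta QH.delta)
        ∘ₗ tensorDelta F QA.delta QH.delta
      = lTensor (A ⊗[F] H) (tensorDelta F QA.delta QH.delta)
          ∘ₗ tensorDelta F QA.delta QH.delta := by
  let _ := QA.toCoalgebra; let _ := QH.toCoalgebra
  rw [tensorDelta_eq_comul]
  exact Coalgebra.coassoc

lemma tensorEps_tensorEta :
    tensorEps F QA.eps QH.eps ∘ₗ tensorEta F QA.eta QH.eta = LinearMap.id := by
  ext; simp [tensorEps, tensorEta]

lemma tensorDelta_tensorEta :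
    tensorDelta F QA.delta QH.delta ∘ₗ tensorEta F QA.eta QH.eta
      = map (tensorEta F QA.eta QH.eta) (tensorEta F QA.eta QH.eta)
          ∘ₗ (TensorProduct.lid F F).symm.toLinearMap := by
  ext; simp [tensorDelta, tensorEta]

end TensorCoalgebra

namespace WreathProduct

variable {F : Type u} [Field F] {A H : Type u} [AddCommGroup A] [Module F A]
  [AddCommGroup H] [Module F H] (QA : HopfQG F A) (QH : HopfQG F H)
  (Ψ : H ⊗[F] A →ₗ[F] A ⊗[F] H)

/- `actRight` and `actLeft` are the multiplications in `A ⊗_Ψ H` by `c ⊗ 1` on the right and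
by `1 ⊗ k` on the left. -/

def actRight : (A ⊗[F] H) ⊗[F] A →ₗ[F] A ⊗[F] H :=
  QA.mulLeftTensor H ∘ₗ lTensor A Ψ ∘ₗ (TensorProduct.assoc F A H A).toLinearMap

def actLeft : H ⊗[F] (A ⊗[F] H) →ₗ[F] A ⊗[F] H :=
  QH.mulRightTensor A ∘ₗ rTensor H Ψ ∘ₗ (TensorProduct.assoc F H A H).symm.toLinearMap

@[simp]
lemma actRight_tmul (u : A) (v : H) (c : A) :
    actRight QA Ψ ((u ⊗ₜ v) ⊗ₜ c) = QA.mulLeftTensor H (u ⊗ₜ Ψ (v ⊗ₜ c)) := rfl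

@[simp]
lemma actLeft_tmul (k : H) (u : A) (v : H) :
    actLeft QH Ψ (k ⊗ₜ (u ⊗ₜ v)) = QH.mulRightTensor A (Ψ (k ⊗ₜ u) ⊗ₜ v) := rfl

@[simp]
lemma wreathLam_tmul (a : A) (h : H) :
    wreathLam F QA QH Ψ (a ⊗ₜ h) = Ψ (QH.lam h ⊗ₜ QA.lam a) := rfl

lemma wreathMul_tmul (a : A) (h : H) (b : A) (g : H) :
    wreathMul F QA QH Ψ ((a ⊗ₜ h) ⊗ₜ (b ⊗ₜ g))
      = QA.mulLeftTensor H (a ⊗ₜ QH.mulRightTensor A (Ψ (h ⊗ₜ b) ⊗ₜ g)) := by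
  simp only [wreathMul, coe_comp, LinearEquiv.coe_coe, Function.comp_apply, assoc_tmul,
    assoc_symm_tmul, lTensor_tmul, rTensor_tmul]
  induction Ψ (h ⊗ₜ b) using TensorProduct.induction_on <;> simp_all [tmul_add, add_tmul]

lemma wreathMul_tmul_left (c : A) (k : H) (w : A ⊗[F] H) :
    wreathMul F QA QH Ψ ((c ⊗ₜ k) ⊗ₜ w) = QA.mulLeftTensor H (c ⊗ₜ actLeft QH Ψ (k ⊗ₜ w)) := by
  induction w using TensorProduct.induction_on <;> simp_all [tmul_add, wreathMul_tmul]

lemma wreathMul_tmul_right (w : A ⊗[F] H) (c : A) (k : H) :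
    wreathMul F QA QH Ψ (w ⊗ₜ (c ⊗ₜ k))
      = QH.mulRightTensor A (actRight QA Ψ (w ⊗ₜ c) ⊗ₜ k) := by
  induction w using TensorProduct.induction_on <;>
    simp_all [add_tmul, wreathMul_tmul, HopfQG.mulLeftTensor_mulRightTensor]

lemma actLeft_lTensor_actLeft (u : H ⊗[F] H) (m : A ⊗[F] H) :
    actLeft QH Ψ (lTensor H (actLeft QH Ψ) (TensorProduct.assoc F H H (A ⊗[F] H) (u ⊗ₜ m)))
      = (lTensor A QH.mu ∘ₗ (TensorProduct.assoc F A H H).toLinearMap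
          ∘ₗ TensorProduct.map Ψ QH.mu
          ∘ₗ (TensorProduct.assoc F H A (H ⊗[F] H)).symm.toLinearMap
          ∘ₗ lTensor H (TensorProduct.assoc F A H H).toLinearMap
          ∘ₗ lTensor H (rTensor H Ψ)
          ∘ₗ lTensor H (TensorProduct.assoc F H A H).symm.toLinearMap
          ∘ₗ (TensorProduct.assoc F H H (A ⊗[F] H)).toLinearMap) (u ⊗ₜ m) := by
  induction u using TensorProduct.induction_on with
  | zero => simp
  | add u₁ u₂ h₁ h₂ => simp_all [add_tmul]
  | tmul x y =>
    induction m using TensorProduct.induction_on with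
    | zero => simp
    | add m₁ m₂ h₁ h₂ => simp_all [tmul_add]
    | tmul b g =>
      simp only [actLeft_tmul, coe_comp, LinearEquiv.coe_coe, Function.comp_apply, assoc_tmul,
        lTensor_tmul, assoc_symm_tmul, rTensor_tmul]
      induction Ψ (y ⊗ₜ b) using TensorProduct.induction_on <;>
        simp_all [tmul_add, add_tmul, HopfQG.mulRightTensor]

lemma actRight_rTensor_actRight (m : A ⊗[F] H) (u : A ⊗[F] A) :
    actRight QA Ψ
        (rTensor A (actRight QA Ψ) ((TensorProduct.assoc F (A ⊗[F] H) A A).symm (m ⊗ₜ u)))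
      = (rTensor H QA.mu ∘ₗ (TensorProduct.assoc F A A H).symm.toLinearMap
          ∘ₗ TensorProduct.map QA.mu Ψ
          ∘ₗ (TensorProduct.assoc F A A (H ⊗[F] A)).symm.toLinearMap
          ∘ₗ lTensor A (TensorProduct.assoc F A H A).toLinearMap
          ∘ₗ lTensor A (rTensor A Ψ)
          ∘ₗ lTensor A (TensorProduct.assoc F H A A).symm.toLinearMap
          ∘ₗ (TensorProduct.assoc F A H (A ⊗[F] A)).toLinearMap) (m ⊗ₜ u) := by
  induction u using TensorProduct.induction_on with
  | zero => simp
  | add u₁ u₂ h₁ h₂ => simp_all [tmul_add]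
  | tmul x y =>
    induction m using TensorProduct.induction_on with
    | zero => simp
    | add m₁ m₂ h₁ h₂ => simp_all [add_tmul]
    | tmul b g =>
      simp only [actRight_tmul, coe_comp, LinearEquiv.coe_coe, Function.comp_apply, assoc_tmul,
        lTensor_tmul, assoc_symm_tmul, rTensor_tmul]
      induction Ψ (g ⊗ₜ x) using TensorProduct.induction_on <;>
        simp_all [tmul_add, add_tmul, HopfQG.mulLeftTensor]

end WreathProduct

section WreathAxioms

open WreathProduct

variable {F : Type u} [Field F] {A H : Type u} [AddCommGroup A] [Module F A]
  [AddCommGroup H] [Module F H] {QA : HopfQG F A} {QH : HopfQG F H}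
  {Ψ : H ⊗[F] A →ₗ[F] A ⊗[F] H}

namespace IsDistLaw

lemma apply_tmul_eta (hΨ : IsDistLaw F QH QA Ψ) (h : H) :
    Ψ (h ⊗ₜ QA.eta 1) = QA.eta 1 ⊗ₜ h := by
  simpa using LinearMap.congr_fun hΨ.2.2.1 h

lemma apply_eta_tmul (hΨ : IsDistLaw F QH QA Ψ) (a : A) :
    Ψ (QH.eta 1 ⊗ₜ a) = a ⊗ₜ QH.eta 1 := by
  simpa using LinearMap.congr_fun hΨ.2.2.2 a

lemma apply_lam_mu_lam (hΨ : IsDistLaw F QH QA Ψ) (h : H) (a c : A) :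
    Ψ (QH.lam h ⊗ₜ QA.mu (QA.lam a ⊗ₜ c)) = actRight QA Ψ (Ψ (QH.lam h ⊗ₜ QA.lam a) ⊗ₜ c) := by
  simpa [actRight, HopfQG.mulLeftTensor] using LinearMap.congr_fun hΨ.1 (h ⊗ₜ (a ⊗ₜ c))

lemma apply_mu_lam_lam (hΨ : IsDistLaw F QH QA Ψ) (k h : H) (a : A) :
    Ψ (QH.mu (k ⊗ₜ QH.lam h) ⊗ₜ QA.lam a) = actLeft QH Ψ (k ⊗ₜ Ψ (QH.lam h ⊗ₜ QA.lam a)) := by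
  simpa [actLeft, HopfQG.mulRightTensor] using LinearMap.congr_fun hΨ.2.1 ((k ⊗ₜ h) ⊗ₜ a)

lemma wreathMul_apply_lam_lam (hΨ : IsDistLaw F QH QA Ψ) (x : H) (y : A) (m : A ⊗[F] H) :
    wreathMul F QA QH Ψ (Ψ (QH.lam x ⊗ₜ QA.lam y) ⊗ₜ m)
      = actLeft QH Ψ (QH.lam x ⊗ₜ QA.mulLeftTensor H (QA.lam y ⊗ₜ m)) := by
  induction m using TensorProduct.induction_on with
  | zero => simp
  | add m₁ m₂ h₁ h₂ => simp_all [tmul_add]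
  | tmul c k => simp [wreathMul_tmul_right, ← hΨ.apply_lam_mu_lam]

lemma wreathMul_tmul_apply_lam_lam (hΨ : IsDistLaw F QH QA Ψ) (m : A ⊗[F] H) (x : H) (y : A) :
    wreathMul F QA QH Ψ (m ⊗ₜ Ψ (QH.lam x ⊗ₜ QA.lam y))
      = actRight QA Ψ (QH.mulRightTensor A (m ⊗ₜ QH.lam x) ⊗ₜ QA.lam y) := by
  induction m using TensorProduct.induction_on with
  | zero => simp
  | add m₁ m₂ h₁ h₂ => simp_all [add_tmul]
  | tmul c k => simp [wreathMul_tmul_left, ← hΨ.apply_mu_lam_lam]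

end IsDistLaw

namespace IsComonoidalDL

lemma tensorDelta_apply (hΨ : IsComonoidalDL F QH QA Ψ) (h : H) (a : A) :
    tensorDelta F QA.delta QH.delta (Ψ (h ⊗ₜ a))
      = map Ψ Ψ (tensorTensorTensorComm F H H A A (QH.delta h ⊗ₜ QA.delta a)) := by
  simpa [tensorDelta] using LinearMap.congr_fun hΨ.2.1 (h ⊗ₜ a)

lemma tensorEps_apply (hΨ : IsComonoidalDL F QH QA Ψ) (h : H) (a : A) :
    tensorEps F QA.eps QH.eps (Ψ (h ⊗ₜ a)) = QH.eps h * QA.eps a := by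
  simpa [tensorEps] using LinearMap.congr_fun hΨ.2.2 (h ⊗ₜ a)

end IsComonoidalDL

namespace IsAComonoidalDL

lemma actLeft_lam_actLeft (hΨ : IsAComonoidalDL F QH QA Ψ) (h : H) (m : A ⊗[F] H) :
    actLeft QH Ψ (lTensor H (actLeft QH Ψ)
        (TensorProduct.assoc F H H (A ⊗[F] H) (rTensor H QH.lam (QH.delta h) ⊗ₜ m)))
      = QH.eps h • m := by
  rw [actLeft_lTensor_actLeft]
  simpa using LinearMap.congr_fun hΨ.2.1 (h ⊗ₜ m)

lemma actLeft_actLeft_lam (hΨ : IsAComonoidalDL F QH QA Ψ) (h : H) (m : A ⊗[F] H) :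
    actLeft QH Ψ (lTensor H (actLeft QH Ψ)
        (TensorProduct.assoc F H H (A ⊗[F] H) (lTensor H QH.lam (QH.delta h) ⊗ₜ m)))
      = QH.eps h • m := by
  rw [actLeft_lTensor_actLeft]
  simpa using LinearMap.congr_fun hΨ.2.2.1 (h ⊗ₜ m)

lemma actRight_actRight_lam (hΨ : IsAComonoidalDL F QH QA Ψ) (m : A ⊗[F] H) (a : A) :
    actRight QA Ψ (rTensor A (actRight QA Ψ)
        ((TensorProduct.assoc F (A ⊗[F] H) A A).symm (m ⊗ₜ rTensor A QA.lam (QA.delta a))))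
      = QA.eps a • m := by
  rw [actRight_rTensor_actRight]
  simpa using LinearMap.congr_fun hΨ.2.2.2.1 (m ⊗ₜ a)

lemma actRight_lam_actRight (hΨ : IsAComonoidalDL F QH QA Ψ) (m : A ⊗[F] H) (a : A) :
    actRight QA Ψ (rTensor A (actRight QA Ψ)
        ((TensorProduct.assoc F (A ⊗[F] H) A A).symm (m ⊗ₜ lTensor A QA.lam (QA.delta a))))
      = QA.eps a • m := by
  rw [actRight_rTensor_actRight]
  simpa using LinearMap.congr_fun hΨ.2.2.2.2 (m ⊗ₜ a)

end IsAComonoidalDL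

namespace WreathProduct

lemma wreathMul_mul_one (hΨ : IsDistLaw F QH QA Ψ) :
    wreathMul F QA QH Ψ ∘ₗ lTensor (A ⊗[F] H) (tensorEta F QA.eta QH.eta)
        ∘ₗ (TensorProduct.rid F (A ⊗[F] H)).symm.toLinearMap = LinearMap.id := by
  ext a h
  simp [tensorEta, wreathMul_tmul, hΨ.apply_tmul_eta]

lemma wreathMul_one_mul (hΨ : IsDistLaw F QH QA Ψ) :
    wreathMul F QA QH Ψ ∘ₗ rTensor (A ⊗[F] H) (tensorEta F QA.eta QH.eta)
        ∘ₗ (TensorProduct.lid F (A ⊗[F] H)).symm.toLinearMap = LinearMap.id := by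
  ext a h
  simp [tensorEta, wreathMul_tmul, hΨ.apply_eta_tmul]

lemma tensorEps_wreathMul (hΨ : IsComonoidalDL F QH QA Ψ) :
    tensorEps F QA.eps QH.eps ∘ₗ wreathMul F QA QH Ψ
      = (TensorProduct.lid F F).toLinearMap
          ∘ₗ map (tensorEps F QA.eps QH.eps) (tensorEps F QA.eps QH.eps) := by
  refine TensorProduct.ext_fourfold' fun a h b g => ?_
  simp only [coe_comp, Function.comp_apply, wreathMul_tmul, HopfQG.tensorEps_mulLeftTensor,
    HopfQG.tensorEps_mulRightTensor, hΨ.tensorEps_apply]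
  simp [tensorEps]
  ring

lemma tensorDelta_wreathMul (hΨ : IsComonoidalDL F QH QA Ψ) :
    tensorDelta F QA.delta QH.delta ∘ₗ wreathMul F QA QH Ψ
      = map (wreathMul F QA QH Ψ) (wreathMul F QA QH Ψ)
          ∘ₗ (tensorTensorTensorComm F (A ⊗[F] H) (A ⊗[F] H) (A ⊗[F] H) (A ⊗[F] H)).toLinearMap
          ∘ₗ map (tensorDelta F QA.delta QH.delta) (tensorDelta F QA.delta QH.delta) := by
  refine TensorProduct.ext_fourfold' fun a h b g => ?_
  simp only [coe_comp, Function.comp_apply, wreathMul_tmul, HopfQG.tensorDelta_mulLeftTensor,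
    HopfQG.tensorDelta_mulRightTensor, hΨ.tensorDelta_apply]
  simp only [tensorDelta, coe_comp, LinearEquiv.coe_coe, Function.comp_apply, map_tmul]
  hopf_tensor_induction QA.delta a with a₁ a₂
  hopf_tensor_induction QH.delta h with h₁ h₂
  hopf_tensor_induction QA.delta b with b₁ b₂
  hopf_tensor_induction QH.delta g with g₁ g₂
  simp [wreathMul_tmul]

lemma wreathMul_antipode_l1 (hΨ : IsAComonoidalDL F QH QA Ψ) :
    wreathMul F QA QH Ψ
        ∘ₗ map (wreathLam F QA QH Ψ) (wreathMul F QA QH Ψ)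
        ∘ₗ (TensorProduct.assoc F (A ⊗[F] H) (A ⊗[F] H) (A ⊗[F] H)).toLinearMap
        ∘ₗ rTensor (A ⊗[F] H) (tensorDelta F QA.delta QH.delta)
      = (TensorProduct.lid F (A ⊗[F] H)).toLinearMap
          ∘ₗ rTensor (A ⊗[F] H) (tensorEps F QA.eps QH.eps) := by
  refine TensorProduct.ext_threefold fun a h m => ?_
  -- `Σ λ(a₁ ⊗ h₁) · ((a₂ ⊗ h₂) · m) = Σ λh₁ · (λa₁ (a₂ (h₂ · m)))`: the sum over `δ a` is
  -- cancelled by the antipode of `A`, then the sum over `δ h` by a-comonoidality.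
  have sum_a : ∀ x y : H,
      wreathMul F QA QH Ψ (map (wreathLam F QA QH Ψ) (wreathMul F QA QH Ψ)
        (TensorProduct.assoc F (A ⊗[F] H) (A ⊗[F] H) (A ⊗[F] H)
          (tensorTensorTensorComm F A A H H (QA.delta a ⊗ₜ (x ⊗ₜ y)) ⊗ₜ m)))
      = QA.eps a • actLeft QH Ψ (QH.lam x ⊗ₜ actLeft QH Ψ (y ⊗ₜ m)) := by
    intro x y
    have expand : ∀ t : A ⊗[F] A,
        wreathMul F QA QH Ψ (map (wreathLam F QA QH Ψ) (wreathMul F QA QH Ψ)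
          (TensorProduct.assoc F (A ⊗[F] H) (A ⊗[F] H) (A ⊗[F] H)
            (tensorTensorTensorComm F A A H H (t ⊗ₜ (x ⊗ₜ y)) ⊗ₜ m)))
        = actLeft QH Ψ (QH.lam x ⊗ₜ QA.mulLeftTensor H (lTensor A (QA.mulLeftTensor H)
            (TensorProduct.assoc F A A (A ⊗[F] H)
              (rTensor A QA.lam t ⊗ₜ actLeft QH Ψ (y ⊗ₜ m))))) := by
      intro t
      induction t using TensorProduct.induction_on with
      | zero => simp
      | add t₁ t₂ h₁ h₂ => simp_all [add_tmul, tmul_add]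
      | tmul a₁ a₂ => simp [wreathMul_tmul_left, hΨ.1.1.wreathMul_apply_lam_lam]
    rw [expand, QA.mulLeftTensor_lam_mulLeftTensor, tmul_smul, map_smul]
  have sum_h : ∀ u : H ⊗[F] H,
      wreathMul F QA QH Ψ (map (wreathLam F QA QH Ψ) (wreathMul F QA QH Ψ)
        (TensorProduct.assoc F (A ⊗[F] H) (A ⊗[F] H) (A ⊗[F] H)
          (tensorTensorTensorComm F A A H H (QA.delta a ⊗ₜ u) ⊗ₜ m)))
      = QA.eps a • actLeft QH Ψ (lTensor H (actLeft QH Ψ)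
          (TensorProduct.assoc F H H (A ⊗[F] H) (rTensor H QH.lam u ⊗ₜ m))) := by
    intro u
    induction u using TensorProduct.induction_on with
    | zero => simp
    | add u₁ u₂ h₁ h₂ => simp_all [add_tmul, tmul_add]
    | tmul x y => simp [sum_a]
  simp [tensorDelta, sum_h, hΨ.actLeft_lam_actLeft, tensorEps, smul_smul]

lemma wreathMul_antipode_l2 (hΨ : IsAComonoidalDL F QH QA Ψ) :
    wreathMul F QA QH Ψ
        ∘ₗ lTensor (A ⊗[F] H) (wreathMul F QA QH Ψ)
        ∘ₗ lTensor (A ⊗[F] H) (rTensor (A ⊗[F] H) (wreathLam F QA QH Ψ))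
        ∘ₗ (TensorProduct.assoc F (A ⊗[F] H) (A ⊗[F] H) (A ⊗[F] H)).toLinearMap
        ∘ₗ rTensor (A ⊗[F] H) (tensorDelta F QA.delta QH.delta)
      = (TensorProduct.lid F (A ⊗[F] H)).toLinearMap
          ∘ₗ rTensor (A ⊗[F] H) (tensorEps F QA.eps QH.eps) := by
  refine TensorProduct.ext_threefold fun a h m => ?_
  -- `Σ (a₁ ⊗ h₁) · (λ(a₂ ⊗ h₂) · m) = Σ a₁ (h₁ · (λh₂ · (λa₂ m)))`: the sum over `δ h` is
  -- cancelled by a-comonoidality, then the sum over `δ a` by the antipode of `A`.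
  have sum_h : ∀ x y : A,
      wreathMul F QA QH Ψ (lTensor (A ⊗[F] H) (wreathMul F QA QH Ψ)
        (lTensor (A ⊗[F] H) (rTensor (A ⊗[F] H) (wreathLam F QA QH Ψ))
          (TensorProduct.assoc F (A ⊗[F] H) (A ⊗[F] H) (A ⊗[F] H)
            (tensorTensorTensorComm F A A H H ((x ⊗ₜ y) ⊗ₜ QH.delta h) ⊗ₜ m))))
      = QH.eps h • QA.mulLeftTensor H (x ⊗ₜ QA.mulLeftTensor H (QA.lam y ⊗ₜ m)) := by
    intro x y
    have expand : ∀ u : H ⊗[F] H,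
        wreathMul F QA QH Ψ (lTensor (A ⊗[F] H) (wreathMul F QA QH Ψ)
          (lTensor (A ⊗[F] H) (rTensor (A ⊗[F] H) (wreathLam F QA QH Ψ))
            (TensorProduct.assoc F (A ⊗[F] H) (A ⊗[F] H) (A ⊗[F] H)
              (tensorTensorTensorComm F A A H H ((x ⊗ₜ y) ⊗ₜ u) ⊗ₜ m))))
        = QA.mulLeftTensor H (x ⊗ₜ actLeft QH Ψ (lTensor H (actLeft QH Ψ)
            (TensorProduct.assoc F H H (A ⊗[F] H)
              (lTensor H QH.lam u ⊗ₜ QA.mulLeftTensor H (QA.lam y ⊗ₜ m))))) := by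
      intro u
      induction u using TensorProduct.induction_on with
      | zero => simp
      | add u₁ u₂ h₁ h₂ => simp_all [add_tmul, tmul_add]
      | tmul h₁ h₂ => simp [wreathMul_tmul_left, hΨ.1.1.wreathMul_apply_lam_lam]
    rw [expand, hΨ.actLeft_actLeft_lam, tmul_smul, map_smul]
  have sum_a : ∀ t : A ⊗[F] A,
      wreathMul F QA QH Ψ (lTensor (A ⊗[F] H) (wreathMul F QA QH Ψ)
        (lTensor (A ⊗[F] H) (rTensor (A ⊗[F] H) (wreathLam F QA QH Ψ))
          (TensorProduct.assoc F (A ⊗[F] H) (A ⊗[F] H) (A ⊗[F] H)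
            (tensorTensorTensorComm F A A H H (t ⊗ₜ QH.delta h) ⊗ₜ m))))
      = QH.eps h • QA.mulLeftTensor H (lTensor A (QA.mulLeftTensor H)
          (TensorProduct.assoc F A A (A ⊗[F] H) (lTensor A QA.lam t ⊗ₜ m))) := by
    intro t
    induction t using TensorProduct.induction_on with
    | zero => simp
    | add t₁ t₂ h₁ h₂ => simp_all [add_tmul]
    | tmul x y => simp [sum_h]
  simp [tensorDelta, sum_a, QA.mulLeftTensor_mulLeftTensor_lam, tensorEps, smul_smul, mul_comm]

lemma wreathMul_antipode_r1 (hΨ : IsAComonoidalDL F QH QA Ψ) :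
    wreathMul F QA QH Ψ
        ∘ₗ rTensor (A ⊗[F] H) (wreathMul F QA QH Ψ)
        ∘ₗ (TensorProduct.assoc F (A ⊗[F] H) (A ⊗[F] H) (A ⊗[F] H)).symm.toLinearMap
        ∘ₗ lTensor (A ⊗[F] H) (rTensor (A ⊗[F] H) (wreathLam F QA QH Ψ))
        ∘ₗ lTensor (A ⊗[F] H) (tensorDelta F QA.delta QH.delta)
      = (TensorProduct.rid F (A ⊗[F] H)).toLinearMap
          ∘ₗ lTensor (A ⊗[F] H) (tensorEps F QA.eps QH.eps) := by
  refine TensorProduct.ext_threefold' fun m a h => ?_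
  -- `Σ (m · λ(a₁ ⊗ h₁)) · (a₂ ⊗ h₂) = Σ (((m λh₁) · λa₁) · a₂) h₂`: the sum over `δ a` is
  -- cancelled by a-comonoidality, then the sum over `δ h` by the antipode of `H`.
  have sum_a : ∀ x y : H,
      wreathMul F QA QH Ψ (rTensor (A ⊗[F] H) (wreathMul F QA QH Ψ)
        ((TensorProduct.assoc F (A ⊗[F] H) (A ⊗[F] H) (A ⊗[F] H)).symm
          (m ⊗ₜ rTensor (A ⊗[F] H) (wreathLam F QA QH Ψ)
            (tensorTensorTensorComm F A A H H (QA.delta a ⊗ₜ (x ⊗ₜ y))))))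
      = QA.eps a • QH.mulRightTensor A (QH.mulRightTensor A (m ⊗ₜ QH.lam x) ⊗ₜ y) := by
    intro x y
    have expand : ∀ t : A ⊗[F] A,
        wreathMul F QA QH Ψ (rTensor (A ⊗[F] H) (wreathMul F QA QH Ψ)
          ((TensorProduct.assoc F (A ⊗[F] H) (A ⊗[F] H) (A ⊗[F] H)).symm
            (m ⊗ₜ rTensor (A ⊗[F] H) (wreathLam F QA QH Ψ)
              (tensorTensorTensorComm F A A H H (t ⊗ₜ (x ⊗ₜ y))))))
        = QH.mulRightTensor A (actRight QA Ψ (rTensor A (actRight QA Ψ)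
            ((TensorProduct.assoc F (A ⊗[F] H) A A).symm
              (QH.mulRightTensor A (m ⊗ₜ QH.lam x) ⊗ₜ rTensor A QA.lam t))) ⊗ₜ y) := by
      intro t
      induction t using TensorProduct.induction_on with
      | zero => simp
      | add t₁ t₂ h₁ h₂ => simp_all [add_tmul, tmul_add]
      | tmul a₁ a₂ => simp [wreathMul_tmul_right, hΨ.1.1.wreathMul_tmul_apply_lam_lam]
    rw [expand, hΨ.actRight_actRight_lam, ← smul_tmul', map_smul]
  have sum_h : ∀ u : H ⊗[F] H,
      wreathMul F QA QH Ψ (rTensor (A ⊗[F] H) (wreathMul F QA QH Ψ)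
        ((TensorProduct.assoc F (A ⊗[F] H) (A ⊗[F] H) (A ⊗[F] H)).symm
          (m ⊗ₜ rTensor (A ⊗[F] H) (wreathLam F QA QH Ψ)
            (tensorTensorTensorComm F A A H H (QA.delta a ⊗ₜ u)))))
      = QA.eps a • QH.mulRightTensor A (rTensor H (QH.mulRightTensor A)
          ((TensorProduct.assoc F (A ⊗[F] H) H H).symm (m ⊗ₜ rTensor H QH.lam u))) := by
    intro u
    induction u using TensorProduct.induction_on with
    | zero => simp
    | add u₁ u₂ h₁ h₂ => simp_all [tmul_add]
    | tmul x y => simp [sum_a]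
  simp [tensorDelta, sum_h, QH.mulRightTensor_mulRightTensor_lam, tensorEps, smul_smul]

lemma wreathMul_antipode_r2 (hΨ : IsAComonoidalDL F QH QA Ψ) :
    wreathMul F QA QH Ψ
        ∘ₗ map (wreathMul F QA QH Ψ) (wreathLam F QA QH Ψ)
        ∘ₗ (TensorProduct.assoc F (A ⊗[F] H) (A ⊗[F] H) (A ⊗[F] H)).symm.toLinearMap
        ∘ₗ lTensor (A ⊗[F] H) (tensorDelta F QA.delta QH.delta)
      = (TensorProduct.rid F (A ⊗[F] H)).toLinearMap
          ∘ₗ lTensor (A ⊗[F] H) (tensorEps F QA.eps QH.eps) := by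
  refine TensorProduct.ext_threefold' fun m a h => ?_
  -- `Σ (m · (a₁ ⊗ h₁)) · λ(a₂ ⊗ h₂) = Σ (((m · a₁) h₁) λh₂) · λa₂`: the sum over `δ h` is
  -- cancelled by the antipode of `H`, then the sum over `δ a` by a-comonoidality.
  have sum_h : ∀ x y : A,
      wreathMul F QA QH Ψ (map (wreathMul F QA QH Ψ) (wreathLam F QA QH Ψ)
        ((TensorProduct.assoc F (A ⊗[F] H) (A ⊗[F] H) (A ⊗[F] H)).symm
          (m ⊗ₜ tensorTensorTensorComm F A A H H ((x ⊗ₜ y) ⊗ₜ QH.delta h))))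
      = QH.eps h • actRight QA Ψ (actRight QA Ψ (m ⊗ₜ x) ⊗ₜ QA.lam y) := by
    intro x y
    have expand : ∀ u : H ⊗[F] H,
        wreathMul F QA QH Ψ (map (wreathMul F QA QH Ψ) (wreathLam F QA QH Ψ)
          ((TensorProduct.assoc F (A ⊗[F] H) (A ⊗[F] H) (A ⊗[F] H)).symm
            (m ⊗ₜ tensorTensorTensorComm F A A H H ((x ⊗ₜ y) ⊗ₜ u))))
        = actRight QA Ψ (QH.mulRightTensor A (rTensor H (QH.mulRightTensor A)
            ((TensorProduct.assoc F (A ⊗[F] H) H H).symm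
              (actRight QA Ψ (m ⊗ₜ x) ⊗ₜ lTensor H QH.lam u))) ⊗ₜ QA.lam y) := by
      intro u
      induction u using TensorProduct.induction_on with
      | zero => simp
      | add u₁ u₂ h₁ h₂ => simp_all [add_tmul, tmul_add]
      | tmul h₁ h₂ => simp [wreathMul_tmul_right, hΨ.1.1.wreathMul_tmul_apply_lam_lam]
    rw [expand, QH.mulRightTensor_lam_mulRightTensor, ← smul_tmul', map_smul]
  have sum_a : ∀ t : A ⊗[F] A,
      wreathMul F QA QH Ψ (map (wreathMul F QA QH Ψ) (wreathLam F QA QH Ψ)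
        ((TensorProduct.assoc F (A ⊗[F] H) (A ⊗[F] H) (A ⊗[F] H)).symm
          (m ⊗ₜ tensorTensorTensorComm F A A H H (t ⊗ₜ QH.delta h))))
      = QH.eps h • actRight QA Ψ (rTensor A (actRight QA Ψ)
          ((TensorProduct.assoc F (A ⊗[F] H) A A).symm (m ⊗ₜ lTensor A QA.lam t))) := by
    intro t
    induction t using TensorProduct.induction_on with
    | zero => simp
    | add t₁ t₂ h₁ h₂ => simp_all [add_tmul, tmul_add]
    | tmul x y => simp [sum_h]
  simp [tensorDelta, sum_a, hΨ.actRight_lam_actRight, tensorEps, smul_smul, mul_comm]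

end WreathProduct

end WreathAxioms

/-- the wreath product `A ⊗_Ψ H` associated to an a-comonoidal distributive
law `Ψ` of `H` over `A` is a Hopf quasigroup. -/
theorem stmt0_wreath_product_is_HopfQuasigroup
    {F : Type u} [Field F] {H A : Type u}
    [AddCommGroup H] [Module F H] [AddCommGroup A] [Module F A]
    (QA : HopfQG F A) (QH : HopfQG F H) (Ψ : H ⊗[F] A →ₗ[F] A ⊗[F] H)
    (hΨ : IsAComonoidalDL F QH QA Ψ) :
    ∃ Q : HopfQG F (A ⊗[F] H),
      Q.eta = tensorEta F QA.eta QH.eta ∧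
      Q.mu = wreathMul F QA QH Ψ ∧
      Q.eps = tensorEps F QA.eps QH.eps ∧
      Q.delta = tensorDelta F QA.delta QH.delta ∧
      Q.lam = wreathLam F QA QH Ψ :=
  ⟨{ eta := tensorEta F QA.eta QH.eta
     mu := wreathMul F QA QH Ψ
     eps := tensorEps F QA.eps QH.eps
     delta := tensorDelta F QA.delta QH.delta
     lam := wreathLam F QA QH Ψ
     mul_one := WreathProduct.wreathMul_mul_one hΨ.1.1
     one_mul := WreathProduct.wreathMul_one_mul hΨ.1.1
     counit_left := tensorDelta_counit_left QA QH
     counit_right := tensorDelta_counit_right QA QH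
     coassoc := tensorDelta_coassoc QA QH
     eps_eta := tensorEps_tensorEta QA QH
     eps_mu := WreathProduct.tensorEps_wreathMul hΨ.1
     delta_eta := tensorDelta_tensorEta QA QH
     delta_mu := WreathProduct.tensorDelta_wreathMul hΨ.1
     antipode_l1 := WreathProduct.wreathMul_antipode_l1 hΨ
     antipode_l2 := WreathProduct.wreathMul_antipode_l2 hΨ
     antipode_r1 := WreathProduct.wreathMul_antipode_r1 hΨ
     antipode_r2 := WreathProduct.wreathMul_antipode_r2 hΨ },
    rfl, rfl, rfl, rfl, rfl⟩
end
end

section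
/- Let X be a Hopf quasigroup over a field F and let H, A be Hopf quasigroups equipped with injective Hopf quasigroup morphisms i_H : H → X and i_A : A → X such that X factorizes as X = AH. Then the linear map Ψ = ω_X⁻¹∘θ_X : H⊗A → A⊗H is a comonoidal distributive law of H over A. -/
open TensorProduct LinearMap

noncomputable section

universe u

/-!
Since `ω_X` is injective, `Ψ` is the unique map with `ω_X ∘ Ψ = θ_X`, so every identity required
of `Ψ` can be checked after composing with `ω_X` (or `ω_X ⊗ ω_X`, injective because everything is
flat over a field). There it becomes an identity between products in `X` of elements of `i_A(A)`
and `i_H(H)`, which follows from the partial associativity built into the factorization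
`X = AH`. The comonoidal conditions hold because `ω_X` and `θ_X` are products of coalgebra maps
and hence coalgebra maps themselves.
-/

namespace HopfQG

variable {F : Type u} [Field F] {X : Type u} [AddCommGroup X] [Module F X] (QX : HopfQG F X)

theorem mu_eta_tmul (x : X) : QX.mu (QX.eta 1 ⊗ₜ[F] x) = x := by
  simpa using LinearMap.congr_fun QX.one_mul x

theorem mu_tmul_eta (x : X) : QX.mu (x ⊗ₜ[F] QX.eta 1) = x := by
  simpa using LinearMap.congr_fun QX.mul_one x

variable {M N : Type u} [AddCommGroup M] [Module F M] [AddCommGroup N] [Module F N]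
  {f : M →ₗ[F] X} {g : N →ₗ[F] X}

theorem mu_map_comp_tensorDelta {dM : M →ₗ[F] M ⊗[F] M} {dN : N →ₗ[F] N ⊗[F] N}
    (hf : TensorProduct.map f f ∘ₗ dM = QX.delta ∘ₗ f)
    (hg : TensorProduct.map g g ∘ₗ dN = QX.delta ∘ₗ g) :
    TensorProduct.map (QX.mu ∘ₗ TensorProduct.map f g) (QX.mu ∘ₗ TensorProduct.map f g)
        ∘ₗ tensorDelta F dM dN
      = QX.delta ∘ₗ QX.mu ∘ₗ TensorProduct.map f g := by
  rw [← LinearMap.comp_assoc, QX.delta_mu]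
  simp only [tensorDelta, TensorProduct.map_comp, LinearMap.comp_assoc]
  rw [← LinearMap.comp_assoc (TensorProduct.map dM dN),
    ← TensorProduct.tensorTensorTensorComm_comp_map, LinearMap.comp_assoc,
    ← TensorProduct.map_comp, hf, hg, TensorProduct.map_comp]

theorem tensorEps_eq_eps_comp_mu_map {eM : M →ₗ[F] F} {eN : N →ₗ[F] F}
    (hf : QX.eps ∘ₗ f = eM) (hg : QX.eps ∘ₗ g = eN) :
    tensorEps F eM eN = QX.eps ∘ₗ QX.mu ∘ₗ TensorProduct.map f g := by
  rw [← LinearMap.comp_assoc, QX.eps_mu, LinearMap.comp_assoc, ← TensorProduct.map_comp, hf, hg,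
    tensorEps]

end HopfQG

namespace IsHopfQGMor

variable {F : Type u} [Field F] {H X : Type u} [AddCommGroup H] [Module F H]
  [AddCommGroup X] [Module F X] {QH : HopfQG F H} {QX : HopfQG F X} {f : H →ₗ[F] X}

theorem map_eta_one (hf : IsHopfQGMor F QH QX f) : f (QH.eta 1) = QX.eta 1 :=
  LinearMap.congr_fun hf.1 1

theorem map_mu_tmul (hf : IsHopfQGMor F QH QX f) (a b : H) :
    f (QH.mu (a ⊗ₜ[F] b)) = QX.mu (f a ⊗ₜ[F] f b) := by
  simpa using LinearMap.congr_fun hf.2.1 (a ⊗ₜ[F] b)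

end IsHopfQGMor

namespace Factorizes

variable {F : Type u} [Field F] {X H A : Type u}
  [AddCommGroup X] [Module F X] [AddCommGroup H] [Module F H] [AddCommGroup A] [Module F A]
  {QX : HopfQG F X} {QH : HopfQG F H} {QA : HopfQG F A} {iH : H →ₗ[F] X} {iA : A →ₗ[F] X}

theorem mu_assoc_omega_left (hfact : Factorizes F QX QH QA iH iA) (a : A) (h : H) (x : X) :
    QX.mu (QX.mu (iA a ⊗ₜ[F] iH h) ⊗ₜ[F] x) = QX.mu (iA a ⊗ₜ[F] QX.mu (iH h ⊗ₜ[F] x)) := by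
  simpa [omegaMap] using LinearMap.congr_fun hfact.2.1 ((a ⊗ₜ[F] h) ⊗ₜ[F] x)

theorem mu_assoc_omega_right (hfact : Factorizes F QX QH QA iH iA) (x : X) (a : A) (h : H) :
    QX.mu (x ⊗ₜ[F] QX.mu (iA a ⊗ₜ[F] iH h)) = QX.mu (QX.mu (x ⊗ₜ[F] iA a) ⊗ₜ[F] iH h) := by
  simpa [omegaMap] using LinearMap.congr_fun hfact.2.2.1 (x ⊗ₜ[F] (a ⊗ₜ[F] h))

theorem mu_assoc_theta_lam_left (hfact : Factorizes F QX QH QA iH iA) (h : H) (a : A) (x : X) :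
    QX.mu (QX.mu (iH (QH.lam h) ⊗ₜ[F] iA (QA.lam a)) ⊗ₜ[F] x)
      = QX.mu (iH (QH.lam h) ⊗ₜ[F] QX.mu (iA (QA.lam a) ⊗ₜ[F] x)) := by
  simpa [thetaMap] using LinearMap.congr_fun hfact.2.2.2.1 ((h ⊗ₜ[F] a) ⊗ₜ[F] x)

theorem mu_assoc_theta_lam_right (hfact : Factorizes F QX QH QA iH iA) (x : X) (h : H) (a : A) :
    QX.mu (x ⊗ₜ[F] QX.mu (iH (QH.lam h) ⊗ₜ[F] iA (QA.lam a)))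
      = QX.mu (QX.mu (x ⊗ₜ[F] iH (QH.lam h)) ⊗ₜ[F] iA (QA.lam a)) := by
  simpa [thetaMap] using LinearMap.congr_fun hfact.2.2.2.2 (x ⊗ₜ[F] (h ⊗ₜ[F] a))

end Factorizes

section DistributiveLaw

variable {F : Type u} [Field F] {X H A : Type u}
  [AddCommGroup X] [Module F X] [AddCommGroup H] [Module F H] [AddCommGroup A] [Module F A]
  {QX : HopfQG F X} {QH : HopfQG F H} {QA : HopfQG F A} {iH : H →ₗ[F] X} {iA : A →ₗ[F] X}
  {Ψ : H ⊗[F] A →ₗ[F] A ⊗[F] H}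

theorem omegaMap_comp_rTensor_mu (hmA : IsHopfQGMor F QA QX iA)
    (hfact : Factorizes F QX QH QA iH iA) :
    omegaMap F QX iA iH ∘ₗ rTensor H QA.mu ∘ₗ (TensorProduct.assoc F A A H).symm.toLinearMap
      = QX.mu ∘ₗ TensorProduct.map iA (omegaMap F QX iA iH) := by
  refine TensorProduct.ext_threefold' fun a b h => ?_
  simp only [omegaMap, LinearMap.coe_comp, Function.comp_apply, LinearEquiv.coe_coe,
    TensorProduct.assoc_symm_tmul, LinearMap.rTensor_tmul, TensorProduct.map_tmul]
  rw [hmA.map_mu_tmul, hfact.mu_assoc_omega_right]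

theorem omegaMap_comp_lTensor_mu (hmH : IsHopfQGMor F QH QX iH)
    (hfact : Factorizes F QX QH QA iH iA) :
    omegaMap F QX iA iH ∘ₗ lTensor A QH.mu ∘ₗ (TensorProduct.assoc F A H H).toLinearMap
      = QX.mu ∘ₗ TensorProduct.map (omegaMap F QX iA iH) iH := by
  refine TensorProduct.ext_threefold fun a h k => ?_
  simp only [omegaMap, LinearMap.coe_comp, Function.comp_apply, LinearEquiv.coe_coe,
    TensorProduct.assoc_tmul, LinearMap.lTensor_tmul, TensorProduct.map_tmul]
  rw [hmH.map_mu_tmul, hfact.mu_assoc_omega_left]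

theorem omegaMap_comp_rTensor_mu_lTensor (hmA : IsHopfQGMor F QA QX iA)
    (hfact : Factorizes F QX QH QA iH iA)
    (hΨ : omegaMap F QX iA iH ∘ₗ Ψ = thetaMap F QX iH iA) :
    omegaMap F QX iA iH ∘ₗ rTensor H QA.mu ∘ₗ (TensorProduct.assoc F A A H).symm.toLinearMap
        ∘ₗ lTensor A Ψ ∘ₗ (TensorProduct.assoc F A H A).toLinearMap
      = QX.mu ∘ₗ TensorProduct.map (omegaMap F QX iA iH) iA := by
  refine TensorProduct.ext_threefold fun a h b => ?_
  have hmul := LinearMap.congr_fun (omegaMap_comp_rTensor_mu hmA hfact) (a ⊗ₜ[F] Ψ (h ⊗ₜ[F] b))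
  have hψ := LinearMap.congr_fun hΨ (h ⊗ₜ[F] b)
  simp only [LinearMap.coe_comp, Function.comp_apply, LinearEquiv.coe_coe,
    TensorProduct.assoc_tmul, LinearMap.lTensor_tmul, TensorProduct.map_tmul] at hmul hψ ⊢
  rw [hmul, hψ]
  simp only [omegaMap, thetaMap, LinearMap.coe_comp, Function.comp_apply, TensorProduct.map_tmul]
  rw [hfact.mu_assoc_omega_left]

theorem omegaMap_comp_lTensor_mu_rTensor (hmH : IsHopfQGMor F QH QX iH)
    (hfact : Factorizes F QX QH QA iH iA)
    (hΨ : omegaMap F QX iA iH ∘ₗ Ψ = thetaMap F QX iH iA) :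
    omegaMap F QX iA iH ∘ₗ lTensor A QH.mu ∘ₗ (TensorProduct.assoc F A H H).toLinearMap
        ∘ₗ rTensor H Ψ ∘ₗ (TensorProduct.assoc F H A H).symm.toLinearMap
      = QX.mu ∘ₗ TensorProduct.map iH (omegaMap F QX iA iH) := by
  refine TensorProduct.ext_threefold' fun h a k => ?_
  have hmul := LinearMap.congr_fun (omegaMap_comp_lTensor_mu hmH hfact) (Ψ (h ⊗ₜ[F] a) ⊗ₜ[F] k)
  have hψ := LinearMap.congr_fun hΨ (h ⊗ₜ[F] a)
  simp only [LinearMap.coe_comp, Function.comp_apply, LinearEquiv.coe_coe,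
    TensorProduct.assoc_symm_tmul, LinearMap.rTensor_tmul, TensorProduct.map_tmul] at hmul hψ ⊢
  rw [hmul, hψ]
  simp only [omegaMap, thetaMap, LinearMap.coe_comp, Function.comp_apply, TensorProduct.map_tmul]
  rw [hfact.mu_assoc_omega_right]

theorem isDistLaw_of_omegaMap_comp_eq (hmH : IsHopfQGMor F QH QX iH)
    (hmA : IsHopfQGMor F QA QX iA) (hfact : Factorizes F QX QH QA iH iA)
    (hΨ : omegaMap F QX iA iH ∘ₗ Ψ = thetaMap F QX iH iA) :
    IsDistLaw F QH QA Ψ := by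
  have hψ : ∀ z, omegaMap F QX iA iH (Ψ z) = thetaMap F QX iH iA z := LinearMap.congr_fun hΨ
  have hinj := hfact.1.1
  refine ⟨(LinearMap.cancel_left hinj).mp ?_, (LinearMap.cancel_left hinj).mp ?_,
    (LinearMap.cancel_left hinj).mp ?_, (LinearMap.cancel_left hinj).mp ?_⟩
  · refine TensorProduct.ext_threefold' fun h a b => ?_
    have hrhs := LinearMap.congr_fun (omegaMap_comp_rTensor_mu_lTensor hmA hfact hΨ)
      (Ψ (QH.lam h ⊗ₜ[F] QA.lam a) ⊗ₜ[F] b)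
    simp only [LinearMap.coe_comp, Function.comp_apply, LinearEquiv.coe_coe,
      TensorProduct.assoc_symm_tmul, LinearMap.rTensor_tmul, LinearMap.lTensor_tmul,
      TensorProduct.map_tmul] at hrhs ⊢
    rw [hrhs, hψ, hψ]
    simp only [thetaMap, LinearMap.coe_comp, Function.comp_apply, TensorProduct.map_tmul]
    rw [hmA.map_mu_tmul, hfact.mu_assoc_theta_lam_left]
  · refine TensorProduct.ext_threefold fun h k a => ?_
    have hrhs := LinearMap.congr_fun (omegaMap_comp_lTensor_mu_rTensor hmH hfact hΨ)
      (h ⊗ₜ[F] Ψ (QH.lam k ⊗ₜ[F] QA.lam a))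
    simp only [LinearMap.coe_comp, Function.comp_apply, LinearEquiv.coe_coe,
      TensorProduct.assoc_tmul, LinearMap.rTensor_tmul, LinearMap.lTensor_tmul,
      TensorProduct.map_tmul] at hrhs ⊢
    rw [hrhs, hψ, hψ]
    simp only [thetaMap, LinearMap.coe_comp, Function.comp_apply, TensorProduct.map_tmul]
    rw [hmH.map_mu_tmul, hfact.mu_assoc_theta_lam_right]
  · refine LinearMap.ext fun h => ?_
    simp only [LinearMap.coe_comp, Function.comp_apply, LinearEquiv.coe_coe,
      TensorProduct.rid_symm_apply, TensorProduct.lid_symm_apply, LinearMap.lTensor_tmul,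
      LinearMap.rTensor_tmul, hψ]
    simp only [thetaMap, omegaMap, LinearMap.coe_comp, Function.comp_apply, TensorProduct.map_tmul]
    rw [hmA.map_eta_one, QX.mu_tmul_eta, QX.mu_eta_tmul]
  · refine LinearMap.ext fun a => ?_
    simp only [LinearMap.coe_comp, Function.comp_apply, LinearEquiv.coe_coe,
      TensorProduct.rid_symm_apply, TensorProduct.lid_symm_apply, LinearMap.lTensor_tmul,
      LinearMap.rTensor_tmul, hψ]
    simp only [thetaMap, omegaMap, LinearMap.coe_comp, Function.comp_apply, TensorProduct.map_tmul]
    rw [hmH.map_eta_one, QX.mu_tmul_eta, QX.mu_eta_tmul]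

theorem isComonoidalDL_of_omegaMap_comp_eq (hmH : IsHopfQGMor F QH QX iH)
    (hmA : IsHopfQGMor F QA QX iA) (hfact : Factorizes F QX QH QA iH iA)
    (hΨ : omegaMap F QX iA iH ∘ₗ Ψ = thetaMap F QX iH iA) :
    IsComonoidalDL F QH QA Ψ := by
  have hinj := hfact.1.1
  refine ⟨isDistLaw_of_omegaMap_comp_eq hmH hmA hfact hΨ, ?_, ?_⟩
  · apply (LinearMap.cancel_left (TensorProduct.map_injective_of_flat_flat _ _ hinj hinj)).mp
    calc TensorProduct.map (omegaMap F QX iA iH) (omegaMap F QX iA iH)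
          ∘ₗ tensorDelta F QA.delta QH.delta ∘ₗ Ψ
        = QX.delta ∘ₗ omegaMap F QX iA iH ∘ₗ Ψ := by
          rw [← LinearMap.comp_assoc, omegaMap, QX.mu_map_comp_tensorDelta hmA.2.2.2 hmH.2.2.2,
            LinearMap.comp_assoc]
      _ = TensorProduct.map (thetaMap F QX iH iA) (thetaMap F QX iH iA)
          ∘ₗ tensorDelta F QH.delta QA.delta := by
          rw [hΨ, thetaMap, QX.mu_map_comp_tensorDelta hmH.2.2.2 hmA.2.2.2]
      _ = TensorProduct.map (omegaMap F QX iA iH) (omegaMap F QX iA iH)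
          ∘ₗ TensorProduct.map Ψ Ψ ∘ₗ tensorDelta F QH.delta QA.delta := by
          rw [← LinearMap.comp_assoc, ← TensorProduct.map_comp, hΨ]
  · rw [QX.tensorEps_eq_eps_comp_mu_map hmA.2.2.1 hmH.2.2.1,
      QX.tensorEps_eq_eps_comp_mu_map hmH.2.2.1 hmA.2.2.1, ← omegaMap, ← thetaMap,
      LinearMap.comp_assoc, hΨ]

end DistributiveLaw

theorem stmt1_factorization_gives_comonoidal_distributive_law_general
    {F : Type u} [Field F] {X H A : Type u}
    [AddCommGroup X] [Module F X] [AddCommGroup H] [Module F H] [AddCommGroup A] [Module F A]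
    (QX : HopfQG F X) (QH : HopfQG F H) (QA : HopfQG F A)
    (iH : H →ₗ[F] X) (iA : A →ₗ[F] X)
    (hmH : IsHopfQGMor F QH QX iH) (hmA : IsHopfQGMor F QA QX iA)
    (hfact : Factorizes F QX QH QA iH iA) :
    IsComonoidalDL F QH QA
      ((LinearEquiv.ofBijective (omegaMap F QX iA iH) hfact.1).symm.toLinearMap
        ∘ₗ thetaMap F QX iH iA) :=
  isComonoidalDL_of_omegaMap_comp_eq hmH hmA hfact <|
    LinearMap.ext fun _ => (LinearEquiv.ofBijective (omegaMap F QX iA iH) hfact.1).apply_symm_apply _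

/-- if `X` factorizes as `X = AH` then `Ψ = ω_X⁻¹∘θ_X` is a comonoidal
distributive law of `H` over `A`. -/
theorem stmt1_factorization_gives_comonoidal_distributive_law
    {F : Type u} [Field F] {X H A : Type u}
    [AddCommGroup X] [Module F X] [AddCommGroup H] [Module F H] [AddCommGroup A] [Module F A]
    (QX : HopfQG F X) (QH : HopfQG F H) (QA : HopfQG F A)
    (iH : H →ₗ[F] X) (iA : A →ₗ[F] X)
    (hiH : Function.Injective iH) (hiA : Function.Injective iA)
    (hmH : IsHopfQGMor F QH QX iH) (hmA : IsHopfQGMor F QA QX iA)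
    (hfact : Factorizes F QX QH QA iH iA) :
    IsComonoidalDL F QH QA
      ((LinearEquiv.ofBijective (omegaMap F QX iA iH) hfact.1).symm.toLinearMap
        ∘ₗ thetaMap F QX iH iA) :=
  stmt1_factorization_gives_comonoidal_distributive_law_general QX QH QA iH iA hmH hmA hfact
end
end

section
/- Let X be a Hopf quasigroup over a field F and let H, A be Hopf quasigroups whose antipodes λ_H and λ_A are bijective, equipped with injective Hopf quasigroup morphisms i_H : H → X and i_A : A → X such that X factorizes as X = AH. Then Ψ = ω_X⁻¹∘θ_X : H⊗A → A⊗H is an a-comonoidal distributive law of H over A. -/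
open TensorProduct LinearMap

noncomputable section

universe u

/-!
Since `ω` is bijective, `Ψ` is the unique map with `ω ∘ Ψ = θ`, so every identity for `Ψ` may be
checked after applying `ω` (or `ω ⊗ ω`). The factorization conditions are the instances of
associativity in `X` that move `i_A a · i_H h` past a further factor, and, after cancelling the
surjective antipodes, the same for `i_H h · i_A a`. With them `ω` turns both sides of each
distributive-law and a-comonoidality identity into one product in `X`: the a-comonoidality
identities become the antipode identities of `X`, transported along `i_H` and `i_A` (morphisms of
Hopf quasigroups commute with antipodes). Comonoidality holds because `ω` and `θ` are coalgebra
maps.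
-/

section

variable {F : Type u} [Field F] {X H A : Type u}
    [AddCommGroup X] [Module F X] [AddCommGroup H] [Module F H] [AddCommGroup A] [Module F A]

namespace HopfQG

variable (Q : HopfQG F H)

theorem mu_eta_tmul_s2 (x : H) : Q.mu (Q.eta 1 ⊗ₜ x) = x := by
  simpa using LinearMap.congr_fun Q.one_mul x

theorem mu_tmul_eta_s2 (x : H) : Q.mu (x ⊗ₜ Q.eta 1) = x := by
  simpa using LinearMap.congr_fun Q.mul_one x

theorem mu_lTensor_lam_delta (h : H) :
    Q.mu (lTensor H Q.lam (Q.delta h)) = Q.eps h • Q.eta 1 := by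
  have unit_left : TensorProduct.map Q.mu Q.lam
      ∘ₗ (TensorProduct.assoc F H H H).symm.toLinearMap
      ∘ₗ TensorProduct.mk F H (H ⊗[F] H) (Q.eta 1) = lTensor H Q.lam := by
    ext x y
    simp [Q.mu_eta_tmul_s2]
  have := LinearMap.congr_fun Q.antipode_r2 (Q.eta 1 ⊗ₜ h)
  simp only [LinearMap.comp_apply, lTensor_tmul, LinearEquiv.coe_coe] at this
  rw [← LinearMap.congr_fun unit_left (Q.delta h)]
  simpa [TensorProduct.smul_tmul', Q.mu_tmul_eta_s2] using this

def iterMulLeft (QX : HopfQG F X) (i : H →ₗ[F] X) : (H ⊗[F] H) ⊗[F] X →ₗ[F] X :=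
  QX.mu ∘ₗ TensorProduct.map i (QX.mu ∘ₗ rTensor X i)
    ∘ₗ (TensorProduct.assoc F H H X).toLinearMap

def iterMulRight (QX : HopfQG F X) (i : A →ₗ[F] X) : X ⊗[F] (A ⊗[F] A) →ₗ[F] X :=
  QX.mu ∘ₗ TensorProduct.map (QX.mu ∘ₗ lTensor X i) i
    ∘ₗ (TensorProduct.assoc F X A A).symm.toLinearMap

@[simp]
theorem iterMulLeft_tmul (QX : HopfQG F X) (i : H →ₗ[F] X) (g g' : H) (y : X) :
    QX.iterMulLeft i ((g ⊗ₜ g') ⊗ₜ y) = QX.mu (i g ⊗ₜ QX.mu (i g' ⊗ₜ y)) := rfl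

@[simp]
theorem iterMulRight_tmul (QX : HopfQG F X) (i : A →ₗ[F] X) (y : X) (c c' : A) :
    QX.iterMulRight i (y ⊗ₜ (c ⊗ₜ c')) = QX.mu (QX.mu (y ⊗ₜ i c) ⊗ₜ i c') := rfl

theorem delta_comp_mu_comp_map (QX : HopfQG F X) {dA : A →ₗ[F] A ⊗[F] A}
    {dH : H →ₗ[F] H ⊗[F] H} {f : A →ₗ[F] X} {g : H →ₗ[F] X}
    (hf : TensorProduct.map f f ∘ₗ dA = QX.delta ∘ₗ f)
    (hg : TensorProduct.map g g ∘ₗ dH = QX.delta ∘ₗ g) :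
    QX.delta ∘ₗ QX.mu ∘ₗ TensorProduct.map f g
      = TensorProduct.map (QX.mu ∘ₗ TensorProduct.map f g) (QX.mu ∘ₗ TensorProduct.map f g)
          ∘ₗ tensorDelta F dA dH := by
  calc QX.delta ∘ₗ QX.mu ∘ₗ TensorProduct.map f g
      = TensorProduct.map QX.mu QX.mu
          ∘ₗ (TensorProduct.tensorTensorTensorComm F X X X X).toLinearMap
          ∘ₗ TensorProduct.map (QX.delta ∘ₗ f) (QX.delta ∘ₗ g) := by
        rw [← LinearMap.comp_assoc, QX.delta_mu, TensorProduct.map_comp]; rfl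
    _ = TensorProduct.map QX.mu QX.mu
          ∘ₗ ((TensorProduct.tensorTensorTensorComm F X X X X).toLinearMap
            ∘ₗ TensorProduct.map (TensorProduct.map f f) (TensorProduct.map g g))
          ∘ₗ TensorProduct.map dA dH := by
        rw [← hf, ← hg, TensorProduct.map_comp]; rfl
    _ = _ := by
        rw [TensorProduct.tensorTensorTensorComm_comp_map, tensorDelta, TensorProduct.map_comp]; rfl

theorem eps_comp_mu_comp_map (QX : HopfQG F X) {eA : A →ₗ[F] F} {eH : H →ₗ[F] F}
    {f : A →ₗ[F] X} {g : H →ₗ[F] X} (hf : QX.eps ∘ₗ f = eA)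
    (hg : QX.eps ∘ₗ g = eH) :
    QX.eps ∘ₗ QX.mu ∘ₗ TensorProduct.map f g = tensorEps F eA eH := by
  rw [← LinearMap.comp_assoc, QX.eps_mu, LinearMap.comp_assoc, ← TensorProduct.map_comp, hf, hg]
  rfl

end HopfQG

namespace IsHopfQGMor

variable {QX : HopfQG F X} {Q : HopfQG F H} {i : H →ₗ[F] X}

theorem map_eta (hi : IsHopfQGMor F Q QX i) : i (Q.eta 1) = QX.eta 1 :=
  LinearMap.congr_fun hi.1 1

theorem map_mu (hi : IsHopfQGMor F Q QX i) (x y : H) :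
    i (Q.mu (x ⊗ₜ y)) = QX.mu (i x ⊗ₜ i y) :=
  LinearMap.congr_fun hi.2.1 (x ⊗ₜ y)

theorem map_eps (hi : IsHopfQGMor F Q QX i) (h : H) : QX.eps (i h) = Q.eps h :=
  LinearMap.congr_fun hi.2.2.1 h

theorem map_delta (hi : IsHopfQGMor F Q QX i) (h : H) :
    QX.delta (i h) = TensorProduct.map i i (Q.delta h) :=
  (LinearMap.congr_fun hi.2.2.2 h).symm

theorem map_lam (hi : IsHopfQGMor F Q QX i) (h : H) : QX.lam (i h) = i (Q.lam h) := by
  -- Evaluate `G` on `(δ ⊗ 1) δ h = (1 ⊗ δ) δ h`: the left antipode axiom of `X` collapses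
  -- the first two factors to `i (λ h)`, the identity `μ (1 ⊗ λ) δ = η ε` of `H` the last
  -- two to `λ (i h)`.
  set G : (H ⊗[F] H) ⊗[F] H →ₗ[F] X :=
    QX.mu ∘ₗ TensorProduct.map QX.lam QX.mu ∘ₗ (TensorProduct.assoc F X X X).toLinearMap
      ∘ₗ TensorProduct.map (TensorProduct.map i i) (i ∘ₗ Q.lam)
  have collapse_first_two : G ∘ₗ rTensor H Q.delta
      = i ∘ₗ Q.lam ∘ₗ (TensorProduct.lid F H).toLinearMap ∘ₗ rTensor H Q.eps := by
    refine TensorProduct.ext' fun x y => ?_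
    have := LinearMap.congr_fun QX.antipode_l1 (i x ⊗ₜ i (Q.lam y))
    simp only [LinearMap.comp_apply, rTensor_tmul, LinearEquiv.coe_coe, TensorProduct.lid_tmul,
      hi.map_delta, hi.map_eps] at this
    simpa [G] using this
  have expand_last_two (x : H) : G ∘ₗ (TensorProduct.assoc F H H H).symm.toLinearMap
      ∘ₗ TensorProduct.mk F H (H ⊗[F] H) x
      = QX.mu ∘ₗ TensorProduct.mk F X X (QX.lam (i x)) ∘ₗ i ∘ₗ Q.mu
          ∘ₗ lTensor H Q.lam := by
    ext y z
    simp [G, hi.map_mu]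
  have collapse_last_two :
      G ∘ₗ (TensorProduct.assoc F H H H).symm.toLinearMap ∘ₗ lTensor H Q.delta
      = QX.lam ∘ₗ i ∘ₗ (TensorProduct.rid F H).toLinearMap ∘ₗ lTensor H Q.eps := by
    refine TensorProduct.ext' fun x y => ?_
    have := LinearMap.congr_fun (expand_last_two x) (Q.delta y)
    simp only [LinearMap.comp_apply, TensorProduct.mk_apply, LinearEquiv.coe_coe] at this
    simp [this, Q.mu_lTensor_lam_delta, hi.map_eta, QX.mu_tmul_eta_s2]
  have coassoc : (TensorProduct.assoc F H H H).symm (lTensor H Q.delta (Q.delta h))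
      = rTensor H Q.delta (Q.delta h) := by
    rw [LinearEquiv.symm_apply_eq]
    exact (LinearMap.congr_fun Q.coassoc h).symm
  have h₁ := LinearMap.congr_fun collapse_first_two (Q.delta h)
  have h₂ := LinearMap.congr_fun collapse_last_two (Q.delta h)
  have c₁ := LinearMap.congr_fun Q.counit_left h
  have c₂ := LinearMap.congr_fun Q.counit_right h
  simp only [LinearMap.comp_apply, LinearEquiv.coe_coe, LinearMap.id_apply] at h₁ h₂ c₁ c₂
  rw [coassoc, h₁, c₁, c₂] at h₂
  exact h₂.symm

theorem iterMulLeft_rTensor_lam_delta (hi : IsHopfQGMor F Q QX i) (h : H) (y : X) :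
    QX.iterMulLeft i (rTensor H Q.lam (Q.delta h) ⊗ₜ y) = Q.eps h • y := by
  have transport : QX.iterMulLeft i ∘ₗ rTensor X (rTensor H Q.lam)
      = QX.mu ∘ₗ TensorProduct.map QX.lam QX.mu ∘ₗ (TensorProduct.assoc F X X X).toLinearMap
          ∘ₗ rTensor X (TensorProduct.map i i) := by
    ext; simp [hi.map_lam]
  have := LinearMap.congr_fun QX.antipode_l1 (i h ⊗ₜ y)
  simp only [LinearMap.comp_apply, rTensor_tmul, LinearEquiv.coe_coe, TensorProduct.lid_tmul,
    hi.map_delta, hi.map_eps] at this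
  rw [← this]
  exact LinearMap.congr_fun transport (Q.delta h ⊗ₜ y)

theorem iterMulLeft_lTensor_lam_delta (hi : IsHopfQGMor F Q QX i) (h : H) (y : X) :
    QX.iterMulLeft i (lTensor H Q.lam (Q.delta h) ⊗ₜ y) = Q.eps h • y := by
  have transport : QX.iterMulLeft i ∘ₗ rTensor X (lTensor H Q.lam)
      = QX.mu ∘ₗ lTensor X QX.mu ∘ₗ lTensor X (rTensor X QX.lam)
          ∘ₗ (TensorProduct.assoc F X X X).toLinearMap
          ∘ₗ rTensor X (TensorProduct.map i i) := by
    ext; simp [hi.map_lam]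
  have := LinearMap.congr_fun QX.antipode_l2 (i h ⊗ₜ y)
  simp only [LinearMap.comp_apply, rTensor_tmul, LinearEquiv.coe_coe, TensorProduct.lid_tmul,
    hi.map_delta, hi.map_eps] at this
  rw [← this]
  exact LinearMap.congr_fun transport (Q.delta h ⊗ₜ y)

theorem iterMulRight_rTensor_lam_delta (hi : IsHopfQGMor F Q QX i) (y : X) (h : H) :
    QX.iterMulRight i (y ⊗ₜ rTensor H Q.lam (Q.delta h)) = Q.eps h • y := by
  have transport : QX.iterMulRight i ∘ₗ lTensor X (rTensor H Q.lam)
      = QX.mu ∘ₗ rTensor X QX.mu ∘ₗ (TensorProduct.assoc F X X X).symm.toLinearMap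
          ∘ₗ lTensor X (rTensor X QX.lam) ∘ₗ lTensor X (TensorProduct.map i i) := by
    ext; simp [hi.map_lam]
  have := LinearMap.congr_fun QX.antipode_r1 (y ⊗ₜ i h)
  simp only [LinearMap.comp_apply, lTensor_tmul, LinearEquiv.coe_coe, TensorProduct.rid_tmul,
    hi.map_delta, hi.map_eps] at this
  rw [← this]
  exact LinearMap.congr_fun transport (y ⊗ₜ Q.delta h)

theorem iterMulRight_lTensor_lam_delta (hi : IsHopfQGMor F Q QX i) (y : X) (h : H) :
    QX.iterMulRight i (y ⊗ₜ lTensor H Q.lam (Q.delta h)) = Q.eps h • y := by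
  have transport : QX.iterMulRight i ∘ₗ lTensor X (lTensor H Q.lam)
      = QX.mu ∘ₗ TensorProduct.map QX.mu QX.lam
          ∘ₗ (TensorProduct.assoc F X X X).symm.toLinearMap
          ∘ₗ lTensor X (TensorProduct.map i i) := by
    ext; simp [hi.map_lam]
  have := LinearMap.congr_fun QX.antipode_r2 (y ⊗ₜ i h)
  simp only [LinearMap.comp_apply, lTensor_tmul, LinearEquiv.coe_coe, TensorProduct.rid_tmul,
    hi.map_delta, hi.map_eps] at this
  rw [← this]
  exact LinearMap.congr_fun transport (y ⊗ₜ Q.delta h)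

end IsHopfQGMor

namespace Factorizes

variable {QX : HopfQG F X} {QH : HopfQG F H} {QA : HopfQG F A}
  {iH : H →ₗ[F] X} {iA : A →ₗ[F] X} {Ψ : H ⊗[F] A →ₗ[F] A ⊗[F] H}

theorem assoc_AHX (hf : Factorizes F QX QH QA iH iA) (a : A) (h : H) (x : X) :
    QX.mu (QX.mu (iA a ⊗ₜ iH h) ⊗ₜ x) = QX.mu (iA a ⊗ₜ QX.mu (iH h ⊗ₜ x)) := by
  simpa [omegaMap] using LinearMap.congr_fun hf.2.1 ((a ⊗ₜ h) ⊗ₜ x)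

theorem assoc_XAH (hf : Factorizes F QX QH QA iH iA) (x : X) (a : A) (h : H) :
    QX.mu (x ⊗ₜ QX.mu (iA a ⊗ₜ iH h)) = QX.mu (QX.mu (x ⊗ₜ iA a) ⊗ₜ iH h) := by
  simpa [omegaMap] using LinearMap.congr_fun hf.2.2.1 (x ⊗ₜ (a ⊗ₜ h))

theorem assoc_lam_HAX (hf : Factorizes F QX QH QA iH iA) (h : H) (a : A) (x : X) :
    QX.mu (QX.mu (iH (QH.lam h) ⊗ₜ iA (QA.lam a)) ⊗ₜ x)
      = QX.mu (iH (QH.lam h) ⊗ₜ QX.mu (iA (QA.lam a) ⊗ₜ x)) := by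
  simpa [thetaMap] using LinearMap.congr_fun hf.2.2.2.1 ((h ⊗ₜ a) ⊗ₜ x)

theorem assoc_lam_XHA (hf : Factorizes F QX QH QA iH iA) (x : X) (h : H) (a : A) :
    QX.mu (x ⊗ₜ QX.mu (iH (QH.lam h) ⊗ₜ iA (QA.lam a)))
      = QX.mu (QX.mu (x ⊗ₜ iH (QH.lam h)) ⊗ₜ iA (QA.lam a)) := by
  simpa [thetaMap] using LinearMap.congr_fun hf.2.2.2.2 (x ⊗ₜ (h ⊗ₜ a))

theorem assoc_HAX (hf : Factorizes F QX QH QA iH iA) (hsH : Function.Surjective QH.lam)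
    (hsA : Function.Surjective QA.lam) (h : H) (a : A) (x : X) :
    QX.mu (QX.mu (iH h ⊗ₜ iA a) ⊗ₜ x) = QX.mu (iH h ⊗ₜ QX.mu (iA a ⊗ₜ x)) := by
  obtain ⟨h, rfl⟩ := hsH h
  obtain ⟨a, rfl⟩ := hsA a
  exact hf.assoc_lam_HAX h a x

theorem assoc_XHA (hf : Factorizes F QX QH QA iH iA) (hsH : Function.Surjective QH.lam)
    (hsA : Function.Surjective QA.lam) (x : X) (h : H) (a : A) :
    QX.mu (x ⊗ₜ QX.mu (iH h ⊗ₜ iA a)) = QX.mu (QX.mu (x ⊗ₜ iH h) ⊗ₜ iA a) := by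
  obtain ⟨h, rfl⟩ := hsH h
  obtain ⟨a, rfl⟩ := hsA a
  exact hf.assoc_lam_XHA x h a

theorem omega_mulLeft (hf : Factorizes F QX QH QA iH iA) (hA : IsHopfQGMor F QA QX iA)
    (a : A) (s : A ⊗[F] H) :
    omegaMap F QX iA iH (rTensor H QA.mu ((TensorProduct.assoc F A A H).symm (a ⊗ₜ s)))
      = QX.mu (iA a ⊗ₜ omegaMap F QX iA iH s) := by
  induction s using TensorProduct.induction_on with
  | zero => simp
  | tmul b k => simp [omegaMap, hA.map_mu, hf.assoc_XAH]
  | add s t hs ht => simp only [TensorProduct.tmul_add, map_add, hs, ht]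

theorem omega_mulRight (hf : Factorizes F QX QH QA iH iA) (hH : IsHopfQGMor F QH QX iH)
    (s : A ⊗[F] H) (h : H) :
    omegaMap F QX iA iH (lTensor A QH.mu (TensorProduct.assoc F A H H (s ⊗ₜ h)))
      = QX.mu (omegaMap F QX iA iH s ⊗ₜ iH h) := by
  induction s using TensorProduct.induction_on with
  | zero => simp
  | tmul b k => simp [omegaMap, hH.map_mu, hf.assoc_AHX]
  | add s t hs ht => simp only [TensorProduct.add_tmul, map_add, hs, ht]

theorem omega_mulLeft_lTensor (hf : Factorizes F QX QH QA iH iA) (hA : IsHopfQGMor F QA QX iA)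
    (hψ : ∀ u, omegaMap F QX iA iH (Ψ u) = thetaMap F QX iH iA u) (s : A ⊗[F] H) (a : A) :
    omegaMap F QX iA iH (rTensor H QA.mu ((TensorProduct.assoc F A A H).symm
        (lTensor A Ψ (TensorProduct.assoc F A H A (s ⊗ₜ a)))))
      = QX.mu (omegaMap F QX iA iH s ⊗ₜ iA a) := by
  induction s using TensorProduct.induction_on with
  | zero => simp
  | tmul b g =>
    rw [TensorProduct.assoc_tmul, lTensor_tmul, hf.omega_mulLeft hA, hψ]
    simp [thetaMap, omegaMap, hf.assoc_AHX]
  | add s t hs ht => simp only [TensorProduct.add_tmul, map_add, hs, ht]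

theorem omega_mulRight_rTensor (hf : Factorizes F QX QH QA iH iA) (hH : IsHopfQGMor F QH QX iH)
    (hψ : ∀ u, omegaMap F QX iA iH (Ψ u) = thetaMap F QX iH iA u) (h : H) (s : A ⊗[F] H) :
    omegaMap F QX iA iH (lTensor A QH.mu (TensorProduct.assoc F A H H
        (rTensor H Ψ ((TensorProduct.assoc F H A H).symm (h ⊗ₜ s)))))
      = QX.mu (iH h ⊗ₜ omegaMap F QX iA iH s) := by
  induction s using TensorProduct.induction_on with
  | zero => simp
  | tmul b g =>
    rw [TensorProduct.assoc_symm_tmul, rTensor_tmul, hf.omega_mulRight hH, hψ]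
    simp [thetaMap, omegaMap, hf.assoc_XAH]
  | add s t hs ht => simp only [TensorProduct.tmul_add, map_add, hs, ht]

theorem isDistLaw (hf : Factorizes F QX QH QA iH iA) (hH : IsHopfQGMor F QH QX iH)
    (hA : IsHopfQGMor F QA QX iA)
    (hψ : ∀ u, omegaMap F QX iA iH (Ψ u) = thetaMap F QX iH iA u) : IsDistLaw F QH QA Ψ := by
  refine ⟨?_, ?_, ?_, ?_⟩
  · refine TensorProduct.ext_threefold' fun h a a' => hf.1.injective ?_
    simp only [LinearMap.comp_apply, LinearEquiv.coe_coe, TensorProduct.map_tmul, rTensor_tmul,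
      lTensor_tmul, TensorProduct.assoc_symm_tmul, hf.omega_mulLeft_lTensor hA hψ, hψ]
    simp [thetaMap, hA.map_mu, hf.assoc_lam_HAX]
  · refine TensorProduct.ext_threefold fun h h' a => hf.1.injective ?_
    simp only [LinearMap.comp_apply, LinearEquiv.coe_coe, TensorProduct.map_tmul, rTensor_tmul,
      lTensor_tmul, TensorProduct.assoc_tmul, hf.omega_mulRight_rTensor hH hψ, hψ]
    simp [thetaMap, hH.map_mu, hf.assoc_lam_XHA]
  · refine LinearMap.ext fun h => hf.1.injective ?_
    simp only [LinearMap.comp_apply, LinearEquiv.coe_coe, TensorProduct.rid_symm_apply,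
      TensorProduct.lid_symm_apply, lTensor_tmul, rTensor_tmul, hψ]
    simp [thetaMap, omegaMap, hA.map_eta, QX.mu_tmul_eta_s2, QX.mu_eta_tmul_s2]
  · refine LinearMap.ext fun a => hf.1.injective ?_
    simp only [LinearMap.comp_apply, LinearEquiv.coe_coe, TensorProduct.rid_symm_apply,
      TensorProduct.lid_symm_apply, lTensor_tmul, rTensor_tmul, hψ]
    simp [thetaMap, omegaMap, hH.map_eta, QX.mu_tmul_eta_s2, QX.mu_eta_tmul_s2]

theorem isComonoidalDL (hf : Factorizes F QX QH QA iH iA) (hH : IsHopfQGMor F QH QX iH)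
    (hA : IsHopfQGMor F QA QX iA)
    (hψ : ∀ u, omegaMap F QX iA iH (Ψ u) = thetaMap F QX iH iA u) :
    IsComonoidalDL F QH QA Ψ := by
  have lift : omegaMap F QX iA iH ∘ₗ Ψ = thetaMap F QX iH iA := LinearMap.ext hψ
  refine ⟨hf.isDistLaw hH hA hψ, ?_, ?_⟩
  · rw [← LinearMap.cancel_left (TensorProduct.map_bijective hf.1 hf.1).1]
    calc TensorProduct.map (omegaMap F QX iA iH) (omegaMap F QX iA iH)
          ∘ₗ tensorDelta F QA.delta QH.delta ∘ₗ Ψ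
        = QX.delta ∘ₗ thetaMap F QX iH iA := by
          rw [← LinearMap.comp_assoc, omegaMap,
            ← QX.delta_comp_mu_comp_map hA.2.2.2 hH.2.2.2, ← lift]
          rfl
      _ = _ := by
          rw [thetaMap, QX.delta_comp_mu_comp_map hH.2.2.2 hA.2.2.2, ← thetaMap, ← lift,
            TensorProduct.map_comp]
          rfl
  · rw [← QX.eps_comp_mu_comp_map hA.2.2.1 hH.2.2.1,
      ← QX.eps_comp_mu_comp_map hH.2.2.1 hA.2.2.1]
    exact congrArg (QX.eps ∘ₗ ·) lift

theorem omega_psi_mul (hf : Factorizes F QX QH QA iH iA) (hsH : Function.Surjective QH.lam)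
    (hsA : Function.Surjective QA.lam) (hH : IsHopfQGMor F QH QX iH)
    (hψ : ∀ u, omegaMap F QX iA iH (Ψ u) = thetaMap F QX iH iA u)
    (g : H) (s : A ⊗[F] H) (k : H) :
    omegaMap F QX iA iH (lTensor A QH.mu (TensorProduct.assoc F A H H
        (TensorProduct.map Ψ QH.mu ((TensorProduct.assoc F H A (H ⊗[F] H)).symm
          (g ⊗ₜ TensorProduct.assoc F A H H (s ⊗ₜ k))))))
      = QX.mu (iH g ⊗ₜ QX.mu (omegaMap F QX iA iH s ⊗ₜ iH k)) := by
  induction s using TensorProduct.induction_on with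
  | zero => simp
  | tmul b g' =>
    rw [TensorProduct.assoc_tmul, TensorProduct.assoc_symm_tmul, TensorProduct.map_tmul,
      hf.omega_mulRight hH, hψ]
    simp [thetaMap, omegaMap, hH.map_mu, hf.assoc_HAX hsH hsA, hf.assoc_AHX]
  | add s t hs ht => simp only [TensorProduct.add_tmul, TensorProduct.tmul_add, map_add, hs, ht]

theorem omega_psi_psi_mul (hf : Factorizes F QX QH QA iH iA) (hsH : Function.Surjective QH.lam)
    (hsA : Function.Surjective QA.lam) (hH : IsHopfQGMor F QH QX iH)
    (hψ : ∀ u, omegaMap F QX iA iH (Ψ u) = thetaMap F QX iH iA u)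
    (t : H ⊗[F] H) (a : A) (k : H) :
    omegaMap F QX iA iH (lTensor A QH.mu (TensorProduct.assoc F A H H
        (TensorProduct.map Ψ QH.mu ((TensorProduct.assoc F H A (H ⊗[F] H)).symm
          (lTensor H (TensorProduct.assoc F A H H).toLinearMap
            (lTensor H (rTensor H Ψ)
              (lTensor H (TensorProduct.assoc F H A H).symm.toLinearMap
                (TensorProduct.assoc F H H (A ⊗[F] H) (t ⊗ₜ (a ⊗ₜ k))))))))))
      = QX.iterMulLeft iH (t ⊗ₜ omegaMap F QX iA iH (a ⊗ₜ k)) := by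
  induction t using TensorProduct.induction_on with
  | zero => simp
  | tmul g g' =>
    simp only [TensorProduct.assoc_tmul, TensorProduct.assoc_symm_tmul, lTensor_tmul,
      rTensor_tmul, LinearEquiv.coe_coe]
    rw [hf.omega_psi_mul hsH hsA hH hψ, hψ]
    simp [thetaMap, omegaMap, hf.assoc_XAH]
  | add s t hs ht => simp only [TensorProduct.add_tmul, map_add, hs, ht]

theorem omega_mul_psi (hf : Factorizes F QX QH QA iH iA) (hsH : Function.Surjective QH.lam)
    (hsA : Function.Surjective QA.lam) (hA : IsHopfQGMor F QA QX iA)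
    (hψ : ∀ u, omegaMap F QX iA iH (Ψ u) = thetaMap F QX iH iA u)
    (a : A) (s : A ⊗[F] H) (c : A) :
    omegaMap F QX iA iH (rTensor H QA.mu ((TensorProduct.assoc F A A H).symm
        (TensorProduct.map QA.mu Ψ ((TensorProduct.assoc F A A (H ⊗[F] A)).symm
          (a ⊗ₜ TensorProduct.assoc F A H A (s ⊗ₜ c))))))
      = QX.mu (QX.mu (iA a ⊗ₜ omegaMap F QX iA iH s) ⊗ₜ iA c) := by
  induction s using TensorProduct.induction_on with
  | zero => simp
  | tmul b g =>
    rw [TensorProduct.assoc_tmul, TensorProduct.assoc_symm_tmul, TensorProduct.map_tmul,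
      hf.omega_mulLeft hA, hψ]
    simp [thetaMap, omegaMap, hA.map_mu, hf.assoc_XHA hsH hsA, hf.assoc_XAH]
  | add s t hs ht => simp only [TensorProduct.add_tmul, TensorProduct.tmul_add, map_add, hs, ht]

theorem omega_mul_psi_psi (hf : Factorizes F QX QH QA iH iA) (hsH : Function.Surjective QH.lam)
    (hsA : Function.Surjective QA.lam) (hA : IsHopfQGMor F QA QX iA)
    (hψ : ∀ u, omegaMap F QX iA iH (Ψ u) = thetaMap F QX iH iA u)
    (a : A) (h : H) (t : A ⊗[F] A) :
    omegaMap F QX iA iH (rTensor H QA.mu ((TensorProduct.assoc F A A H).symm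
        (TensorProduct.map QA.mu Ψ ((TensorProduct.assoc F A A (H ⊗[F] A)).symm
          (lTensor A (TensorProduct.assoc F A H A).toLinearMap
            (lTensor A (rTensor A Ψ)
              (lTensor A (TensorProduct.assoc F H A A).symm.toLinearMap
                (TensorProduct.assoc F A H (A ⊗[F] A) ((a ⊗ₜ h) ⊗ₜ t)))))))))
      = QX.iterMulRight iA (omegaMap F QX iA iH (a ⊗ₜ h) ⊗ₜ t) := by
  induction t using TensorProduct.induction_on with
  | zero => simp
  | tmul c c' =>
    simp only [TensorProduct.assoc_tmul, TensorProduct.assoc_symm_tmul, lTensor_tmul,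
      rTensor_tmul, LinearEquiv.coe_coe]
    rw [hf.omega_mul_psi hsH hsA hA hψ, hψ]
    simp [thetaMap, omegaMap, hf.assoc_XHA hsH hsA]
  | add s t hs ht => simp only [TensorProduct.tmul_add, map_add, hs, ht]

theorem aComonoidal_left (hf : Factorizes F QX QH QA iH iA) (hsH : Function.Surjective QH.lam)
    (hsA : Function.Surjective QA.lam) (hH : IsHopfQGMor F QH QX iH)
    (hψ : ∀ u, omegaMap F QX iA iH (Ψ u) = thetaMap F QX iH iA u) (φ : H →ₗ[F] H ⊗[F] H)
    (hφ : ∀ h y, QX.iterMulLeft iH (φ h ⊗ₜ y) = QH.eps h • y) :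
    lTensor A QH.mu ∘ₗ (TensorProduct.assoc F A H H).toLinearMap
        ∘ₗ TensorProduct.map Ψ QH.mu
        ∘ₗ (TensorProduct.assoc F H A (H ⊗[F] H)).symm.toLinearMap
        ∘ₗ lTensor H (TensorProduct.assoc F A H H).toLinearMap
        ∘ₗ lTensor H (rTensor H Ψ)
        ∘ₗ lTensor H (TensorProduct.assoc F H A H).symm.toLinearMap
        ∘ₗ (TensorProduct.assoc F H H (A ⊗[F] H)).toLinearMap
        ∘ₗ rTensor (A ⊗[F] H) φ
      = (TensorProduct.lid F (A ⊗[F] H)).toLinearMap ∘ₗ rTensor (A ⊗[F] H) QH.eps := by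
  refine TensorProduct.ext_threefold' fun h a k => hf.1.injective ?_
  simp only [LinearMap.comp_apply, LinearEquiv.coe_coe, rTensor_tmul, TensorProduct.lid_tmul]
  rw [hf.omega_psi_psi_mul hsH hsA hH hψ, hφ, map_smul]

theorem aComonoidal_right (hf : Factorizes F QX QH QA iH iA) (hsH : Function.Surjective QH.lam)
    (hsA : Function.Surjective QA.lam) (hA : IsHopfQGMor F QA QX iA)
    (hψ : ∀ u, omegaMap F QX iA iH (Ψ u) = thetaMap F QX iH iA u) (φ : A →ₗ[F] A ⊗[F] A)
    (hφ : ∀ y a, QX.iterMulRight iA (y ⊗ₜ φ a) = QA.eps a • y) :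
    rTensor H QA.mu ∘ₗ (TensorProduct.assoc F A A H).symm.toLinearMap
        ∘ₗ TensorProduct.map QA.mu Ψ
        ∘ₗ (TensorProduct.assoc F A A (H ⊗[F] A)).symm.toLinearMap
        ∘ₗ lTensor A (TensorProduct.assoc F A H A).toLinearMap
        ∘ₗ lTensor A (rTensor A Ψ)
        ∘ₗ lTensor A (TensorProduct.assoc F H A A).symm.toLinearMap
        ∘ₗ (TensorProduct.assoc F A H (A ⊗[F] A)).toLinearMap
        ∘ₗ lTensor (A ⊗[F] H) φ
      = (TensorProduct.rid F (A ⊗[F] H)).toLinearMap ∘ₗ lTensor (A ⊗[F] H) QA.eps := by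
  refine TensorProduct.ext_threefold fun a h c => hf.1.injective ?_
  simp only [LinearMap.comp_apply, LinearEquiv.coe_coe, lTensor_tmul, TensorProduct.rid_tmul]
  rw [hf.omega_mul_psi_psi hsH hsA hA hψ, hφ, map_smul]

theorem isAComonoidalDL (hf : Factorizes F QX QH QA iH iA) (hsH : Function.Surjective QH.lam)
    (hsA : Function.Surjective QA.lam) (hH : IsHopfQGMor F QH QX iH) (hA : IsHopfQGMor F QA QX iA)
    (hψ : ∀ u, omegaMap F QX iA iH (Ψ u) = thetaMap F QX iH iA u) :
    IsAComonoidalDL F QH QA Ψ :=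
  ⟨hf.isComonoidalDL hH hA hψ,
    hf.aComonoidal_left hsH hsA hH hψ _ hH.iterMulLeft_rTensor_lam_delta,
    hf.aComonoidal_left hsH hsA hH hψ _ hH.iterMulLeft_lTensor_lam_delta,
    hf.aComonoidal_right hsH hsA hA hψ _ hA.iterMulRight_rTensor_lam_delta,
    hf.aComonoidal_right hsH hsA hA hψ _ hA.iterMulRight_lTensor_lam_delta⟩

end Factorizes

end

theorem stmt2_factorization_gives_a_comonoidal_distributive_law_general
    {F : Type u} [Field F] {X H A : Type u}
    [AddCommGroup X] [Module F X] [AddCommGroup H] [Module F H] [AddCommGroup A] [Module F A]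
    (QX : HopfQG F X) (QH : HopfQG F H) (QA : HopfQG F A)
    (hlamH : Function.Bijective QH.lam) (hlamA : Function.Bijective QA.lam)
    (iH : H →ₗ[F] X) (iA : A →ₗ[F] X)
    (hmH : IsHopfQGMor F QH QX iH) (hmA : IsHopfQGMor F QA QX iA)
    (hfact : Factorizes F QX QH QA iH iA) :
    IsAComonoidalDL F QH QA
      ((LinearEquiv.ofBijective (omegaMap F QX iA iH) hfact.1).symm.toLinearMap
        ∘ₗ thetaMap F QX iH iA) :=
  hfact.isAComonoidalDL hlamH.2 hlamA.2 hmH hmA fun _ =>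
    (LinearEquiv.ofBijective (omegaMap F QX iA iH) hfact.1).apply_symm_apply _

/-- if, moreover, the antipodes of `H` and `A` are bijective, then
`Ψ = ω_X⁻¹∘θ_X` is an a-comonoidal distributive law of `H` over `A`. -/
theorem stmt2_factorization_gives_a_comonoidal_distributive_law
    {F : Type u} [Field F] {X H A : Type u}
    [AddCommGroup X] [Module F X] [AddCommGroup H] [Module F H] [AddCommGroup A] [Module F A]
    (QX : HopfQG F X) (QH : HopfQG F H) (QA : HopfQG F A)
    (hlamH : Function.Bijective QH.lam) (hlamA : Function.Bijective QA.lam)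
    (iH : H →ₗ[F] X) (iA : A →ₗ[F] X)
    (hiH : Function.Injective iH) (hiA : Function.Injective iA)
    (hmH : IsHopfQGMor F QH QX iH) (hmA : IsHopfQGMor F QA QX iA)
    (hfact : Factorizes F QX QH QA iH iA) :
    IsAComonoidalDL F QH QA
      ((LinearEquiv.ofBijective (omegaMap F QX iA iH) hfact.1).symm.toLinearMap
        ∘ₗ thetaMap F QX iH iA) :=
  stmt2_factorization_gives_a_comonoidal_distributive_law_general QX QH QA hlamH hlamA iH iA hmH hmA
    hfact
end
end

section
/- Let X be a Hopf quasigroup over a field F and let H, A be Hopf quasigroups whose antipodes λ_H and λ_A are bijective, equipped with injective Hopf quasigroup morphisms i_H : H → X and i_A : A → X such that X factorizes as X = AH. Let Ψ = ω_X⁻¹∘θ_X, which is an a-comonoidal distributive law of H over A. Then ω_X is an isomorphism of Hopf quasigroups from the wreath product A⊗_Ψ H to X, i.e. ω_X is bijective and preserves unit, product, counit and coproduct of the wreath product structure. -/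
open TensorProduct LinearMap

noncomputable section

universe u

/-!
Writing `ω (a ⊗ h) = a·h`, multiplicativity is a rebracketing: the factorization axioms let
`a·h` be re-associated against any element from either side, so
`(a·h)(a'·h') = a·((h·a')·h')`, and `Ψ = ω⁻¹θ` is what rewrites `h·a'` as `ω (Ψ (h ⊗ a'))`,
turning the right-hand side into the image of the wreath product. Unit, counit and coproduct are
preserved because `μ_X` preserves them and `i_A`, `i_H` are morphisms.
-/

section Omega

variable {F : Type u} [Field F] {X H A : Type u}
  [AddCommGroup X] [Module F X] [AddCommGroup H] [Module F H] [AddCommGroup A] [Module F A]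
  {QX : HopfQG F X} {QH : HopfQG F H} {QA : HopfQG F A} {iH : H →ₗ[F] X} {iA : A →ₗ[F] X}

theorem omegaMap_comp_tensorEta (hA : iA ∘ₗ QA.eta = QX.eta) (hH : iH ∘ₗ QH.eta = QX.eta) :
    omegaMap F QX iA iH ∘ₗ tensorEta F QA.eta QH.eta = QX.eta := by
  ext
  have h := LinearMap.congr_fun QX.mul_one (QX.eta 1)
  simp only [omegaMap, tensorEta, comp_apply, LinearEquiv.coe_coe, lid_symm_apply, map_tmul,
    rid_symm_apply, lTensor_tmul, id_apply] at h ⊢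
  rw [← LinearMap.comp_apply iA, ← LinearMap.comp_apply iH, hA, hH, h]

theorem eps_comp_omegaMap (hA : QX.eps ∘ₗ iA = QA.eps) (hH : QX.eps ∘ₗ iH = QH.eps) :
    QX.eps ∘ₗ omegaMap F QX iA iH = tensorEps F QA.eps QH.eps := by
  rw [omegaMap, ← LinearMap.comp_assoc, QX.eps_mu, LinearMap.comp_assoc, ← map_comp, hA, hH,
    tensorEps]

theorem map_omegaMap_comp_tensorDelta (hA : map iA iA ∘ₗ QA.delta = QX.delta ∘ₗ iA)
    (hH : map iH iH ∘ₗ QH.delta = QX.delta ∘ₗ iH) :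
    map (omegaMap F QX iA iH) (omegaMap F QX iA iH) ∘ₗ tensorDelta F QA.delta QH.delta
      = QX.delta ∘ₗ omegaMap F QX iA iH := by
  calc map (omegaMap F QX iA iH) (omegaMap F QX iA iH) ∘ₗ tensorDelta F QA.delta QH.delta
      = map QX.mu QX.mu ∘ₗ (tensorTensorTensorComm F X X X X).toLinearMap
          ∘ₗ map (map iA iA ∘ₗ QA.delta) (map iH iH ∘ₗ QH.delta) := by
        rw [omegaMap, tensorDelta, map_comp, LinearMap.comp_assoc,
          ← LinearMap.comp_assoc (map QA.delta QH.delta), ← tensorTensorTensorComm_comp_map,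
          LinearMap.comp_assoc, ← map_comp]
    _ = QX.delta ∘ₗ omegaMap F QX iA iH := by
        rw [hA, hH, map_comp, omegaMap, ← LinearMap.comp_assoc _ QX.mu, QX.delta_mu]
        simp only [LinearMap.comp_assoc]

namespace Factorizes

theorem omega_mu_assoc (hfact : Factorizes F QX QH QA iH iA) (a : A) (h : H) (x : X) :
    QX.mu (QX.mu (iA a ⊗ₜ iH h) ⊗ₜ x) = QX.mu (iA a ⊗ₜ QX.mu (iH h ⊗ₜ x)) := by
  simpa [omegaMap] using LinearMap.congr_fun hfact.2.1 ((a ⊗ₜ h) ⊗ₜ x)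

theorem mu_omega_assoc (hfact : Factorizes F QX QH QA iH iA) (x : X) (a : A) (h : H) :
    QX.mu (x ⊗ₜ QX.mu (iA a ⊗ₜ iH h)) = QX.mu (QX.mu (x ⊗ₜ iA a) ⊗ₜ iH h) := by
  simpa [omegaMap] using LinearMap.congr_fun hfact.2.2.1 (x ⊗ₜ (a ⊗ₜ h))

theorem omegaMap_mu_mu (hfact : Factorizes F QX QH QA iH iA)
    (hA : iA ∘ₗ QA.mu = QX.mu ∘ₗ map iA iA) (hH : iH ∘ₗ QH.mu = QX.mu ∘ₗ map iH iH)
    (a : A) (t : A ⊗[F] H) (h : H) :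
    omegaMap F QX iA iH (map QA.mu QH.mu
        ((TensorProduct.assoc F A A (H ⊗[F] H)).symm (a ⊗ₜ TensorProduct.assoc F A H H (t ⊗ₜ h))))
      = QX.mu (iA a ⊗ₜ QX.mu (omegaMap F QX iA iH t ⊗ₜ iH h)) := by
  induction t using TensorProduct.induction_on with
  | zero => simp
  | tmul b k =>
    have mulA : iA (QA.mu (a ⊗ₜ b)) = QX.mu (iA a ⊗ₜ iA b) := LinearMap.congr_fun hA (a ⊗ₜ b)
    have mulH : iH (QH.mu (k ⊗ₜ h)) = QX.mu (iH k ⊗ₜ iH h) := LinearMap.congr_fun hH (k ⊗ₜ h)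
    simp only [assoc_tmul, assoc_symm_tmul, map_tmul, omegaMap, comp_apply]
    rw [hfact.omega_mu_assoc, ← mulH, hfact.mu_omega_assoc, ← mulA]
  | add t t' ht ht' =>
    simp only [add_tmul, tmul_add, map_add] at ht ht' ⊢
    rw [ht, ht']

theorem omegaMap_comp_wreathMul (hfact : Factorizes F QX QH QA iH iA)
    (hA : iA ∘ₗ QA.mu = QX.mu ∘ₗ map iA iA) (hH : iH ∘ₗ QH.mu = QX.mu ∘ₗ map iH iH)
    {Ψ : H ⊗[F] A →ₗ[F] A ⊗[F] H} (hΨ : omegaMap F QX iA iH ∘ₗ Ψ = thetaMap F QX iH iA) :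
    omegaMap F QX iA iH ∘ₗ wreathMul F QA QH Ψ
      = QX.mu ∘ₗ map (omegaMap F QX iA iH) (omegaMap F QX iA iH) := by
  refine TensorProduct.ext_fourfold' fun a h a' h' => ?_
  have hθ : omegaMap F QX iA iH (Ψ (h ⊗ₜ a')) = QX.mu (iH h ⊗ₜ iA a') :=
    LinearMap.congr_fun hΨ (h ⊗ₜ a')
  calc omegaMap F QX iA iH (wreathMul F QA QH Ψ ((a ⊗ₜ h) ⊗ₜ (a' ⊗ₜ h')))
      = QX.mu (iA a ⊗ₜ QX.mu (QX.mu (iH h ⊗ₜ iA a') ⊗ₜ iH h')) := by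
        rw [← hθ, ← hfact.omegaMap_mu_mu hA hH]
        rfl
    _ = QX.mu (QX.mu (iA a ⊗ₜ iH h) ⊗ₜ QX.mu (iA a' ⊗ₜ iH h')) := by
        rw [hfact.omega_mu_assoc, hfact.mu_omega_assoc]
    _ = _ := rfl

end Factorizes

end Omega

theorem stmt3_omega_is_isomorphism_from_wreath_product_general
    {F : Type u} [Field F] {X H A : Type u}
    [AddCommGroup X] [Module F X] [AddCommGroup H] [Module F H] [AddCommGroup A] [Module F A]
    (QX : HopfQG F X) (QH : HopfQG F H) (QA : HopfQG F A)
    (iH : H →ₗ[F] X) (iA : A →ₗ[F] X)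
    (hmH : IsHopfQGMor F QH QX iH) (hmA : IsHopfQGMor F QA QX iA)
    (hfact : Factorizes F QX QH QA iH iA) :
    ∀ Ψ : H ⊗[F] A →ₗ[F] A ⊗[F] H,
      Ψ = (LinearEquiv.ofBijective (omegaMap F QX iA iH) hfact.1).symm.toLinearMap
        ∘ₗ thetaMap F QX iH iA →
      Function.Bijective (omegaMap F QX iA iH)
      ∧ omegaMap F QX iA iH ∘ₗ tensorEta F QA.eta QH.eta = QX.eta
      ∧ omegaMap F QX iA iH ∘ₗ wreathMul F QA QH Ψ
          = QX.mu ∘ₗ TensorProduct.map (omegaMap F QX iA iH) (omegaMap F QX iA iH)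
      ∧ QX.eps ∘ₗ omegaMap F QX iA iH = tensorEps F QA.eps QH.eps
      ∧ TensorProduct.map (omegaMap F QX iA iH) (omegaMap F QX iA iH) ∘ₗ tensorDelta F QA.delta QH.delta
          = QX.delta ∘ₗ omegaMap F QX iA iH := by
  rintro Ψ rfl
  have hωΨ : omegaMap F QX iA iH ∘ₗ
      (LinearEquiv.ofBijective (omegaMap F QX iA iH) hfact.1).symm.toLinearMap
        ∘ₗ thetaMap F QX iH iA = thetaMap F QX iH iA :=
    LinearMap.ext fun x => (LinearEquiv.ofBijective _ hfact.1).apply_symm_apply _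
  exact ⟨hfact.1, omegaMap_comp_tensorEta hmA.1 hmH.1,
    hfact.omegaMap_comp_wreathMul hmA.2.1 hmH.2.1 hωΨ,
    eps_comp_omegaMap hmA.2.2.1 hmH.2.2.1, map_omegaMap_comp_tensorDelta hmA.2.2.2 hmH.2.2.2⟩

/-- `ω_X` is an isomorphism of Hopf quasigroups from the wreath product
`A ⊗_Ψ H` (with `Ψ = ω_X⁻¹∘θ_X`) to `X`. -/
theorem stmt3_omega_is_isomorphism_from_wreath_product
    {F : Type u} [Field F] {X H A : Type u}
    [AddCommGroup X] [Module F X] [AddCommGroup H] [Module F H] [AddCommGroup A] [Module F A]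
    (QX : HopfQG F X) (QH : HopfQG F H) (QA : HopfQG F A)
    (hlamH : Function.Bijective QH.lam) (hlamA : Function.Bijective QA.lam)
    (iH : H →ₗ[F] X) (iA : A →ₗ[F] X)
    (hiH : Function.Injective iH) (hiA : Function.Injective iA)
    (hmH : IsHopfQGMor F QH QX iH) (hmA : IsHopfQGMor F QA QX iA)
    (hfact : Factorizes F QX QH QA iH iA) :
    ∀ Ψ : H ⊗[F] A →ₗ[F] A ⊗[F] H,
      Ψ = (LinearEquiv.ofBijective (omegaMap F QX iA iH) hfact.1).symm.toLinearMap
        ∘ₗ thetaMap F QX iH iA →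
      Function.Bijective (omegaMap F QX iA iH)
      ∧ omegaMap F QX iA iH ∘ₗ tensorEta F QA.eta QH.eta = QX.eta
      ∧ omegaMap F QX iA iH ∘ₗ wreathMul F QA QH Ψ
          = QX.mu ∘ₗ TensorProduct.map (omegaMap F QX iA iH) (omegaMap F QX iA iH)
      ∧ QX.eps ∘ₗ omegaMap F QX iA iH = tensorEps F QA.eps QH.eps
      ∧ TensorProduct.map (omegaMap F QX iA iH) (omegaMap F QX iA iH) ∘ₗ tensorDelta F QA.delta QH.delta
          = QX.delta ∘ₗ omegaMap F QX iA iH :=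
  stmt3_omega_is_isomorphism_from_wreath_product_general QX QH QA iH iA hmH hmA hfact
end
end

section
/- Let H and A be Hopf quasigroups over a field F whose antipodes λ_H and λ_A are bijective, and let Ψ : H⊗A → A⊗H be a comonoidal distributive law of H over A. Then the linear map φ_A = (A⊗ε_H)∘Ψ : H⊗A → A makes A a left H-module comonoid. -/
open TensorProduct LinearMap

noncomputable section

universe u

section MPDefs

variable (F : Type u) [Field F]
variable {H : Type u} [AddCommGroup H] [Module F H]
variable {A : Type u} [AddCommGroup A] [Module F A]

/-- `(A,φA)` is a left `H`-module comonoid. -/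
def IsLeftModuleComonoid (QH : HopfQG F H) (QA : HopfQG F A) (φA : H ⊗[F] A →ₗ[F] A) : Prop :=
  (φA ∘ₗ rTensor A QH.eta ∘ₗ (TensorProduct.lid F A).symm.toLinearMap = LinearMap.id)
  ∧ (φA ∘ₗ lTensor H φA ∘ₗ (TensorProduct.assoc F H H A).toLinearMap = φA ∘ₗ rTensor A QH.mu)
  ∧ (QA.eps ∘ₗ φA = tensorEps F QH.eps QA.eps)
  ∧ (QA.delta ∘ₗ φA
      = TensorProduct.map φA φA ∘ₗ (TensorProduct.tensorTensorTensorComm F H H A A).toLinearMap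
          ∘ₗ TensorProduct.map QH.delta QA.delta)

/-- `(H,φH)` is a right `A`-module comonoid. -/
def IsRightModuleComonoid (QH : HopfQG F H) (QA : HopfQG F A) (φH : H ⊗[F] A →ₗ[F] H) : Prop :=
  (φH ∘ₗ lTensor H QA.eta ∘ₗ (TensorProduct.rid F H).symm.toLinearMap = LinearMap.id)
  ∧ (φH ∘ₗ rTensor A φH ∘ₗ (TensorProduct.assoc F H A A).symm.toLinearMap
      = φH ∘ₗ lTensor H QA.mu)
  ∧ (QH.eps ∘ₗ φH = tensorEps F QH.eps QA.eps)
  ∧ (QH.delta ∘ₗ φH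
      = TensorProduct.map φH φH ∘ₗ (TensorProduct.tensorTensorTensorComm F H H A A).toLinearMap
          ∘ₗ TensorProduct.map QH.delta QA.delta)

/-- The map `Ψ = (φ_A⊗φ_H)∘(H⊗c_{H,A}⊗A)∘(δ_H⊗δ_A)` associated to a pair of actions. -/
def mpPsi (QA : HopfQG F A) (QH : HopfQG F H)
    (φA : H ⊗[F] A →ₗ[F] A) (φH : H ⊗[F] A →ₗ[F] H) : H ⊗[F] A →ₗ[F] A ⊗[F] H :=
  TensorProduct.map φA φH ∘ₗ (TensorProduct.tensorTensorTensorComm F H H A A).toLinearMap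
    ∘ₗ TensorProduct.map QH.delta QA.delta

/-- `(A,H)` is a matched pair of Hopf quasigroups with actions `φA`, `φH`. -/
def IsMatchedPair (QA : HopfQG F A) (QH : HopfQG F H)
    (φA : H ⊗[F] A →ₗ[F] A) (φH : H ⊗[F] A →ₗ[F] H) : Prop :=
  IsLeftModuleComonoid F QH QA φA
  ∧ IsRightModuleComonoid F QH QA φH
  -- (d1) φ_A∘(H⊗η_A) = ε_H⊗η_A
  ∧ (φA ∘ₗ lTensor H QA.eta ∘ₗ (TensorProduct.rid F H).symm.toLinearMap = QA.eta ∘ₗ QH.eps)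
  -- (d2) φ_H∘(η_H⊗A) = η_H⊗ε_A
  ∧ (φH ∘ₗ rTensor A QH.eta ∘ₗ (TensorProduct.lid F A).symm.toLinearMap = QH.eta ∘ₗ QA.eps)
  -- (d3) (φ_H⊗φ_A)∘δ_{H⊗A} = c_{A,H}∘Ψ
  ∧ (TensorProduct.map φH φA ∘ₗ (TensorProduct.tensorTensorTensorComm F H H A A).toLinearMap
        ∘ₗ TensorProduct.map QH.delta QA.delta
      = (TensorProduct.comm F A H).toLinearMap ∘ₗ mpPsi F QA QH φA φH)
  -- (d4)
  ∧ (φA ∘ₗ lTensor H QA.mu ∘ₗ TensorProduct.map QH.lam (rTensor A QA.lam)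
      = QA.mu ∘ₗ lTensor A φA ∘ₗ (TensorProduct.assoc F A H A).toLinearMap
          ∘ₗ rTensor A (mpPsi F QA QH φA φH ∘ₗ TensorProduct.map QH.lam QA.lam)
          ∘ₗ (TensorProduct.assoc F H A A).symm.toLinearMap)
  -- (d5)
  ∧ (QH.mu ∘ₗ TensorProduct.map φH QH.mu
        ∘ₗ (TensorProduct.assoc F H A (H ⊗[F] H)).symm.toLinearMap
        ∘ₗ lTensor H (TensorProduct.assoc F A H H).toLinearMap
        ∘ₗ TensorProduct.map QH.lam (rTensor H (mpPsi F QA QH φA φH))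
        ∘ₗ lTensor H (TensorProduct.assoc F H A H).symm.toLinearMap
        ∘ₗ (TensorProduct.assoc F H H (A ⊗[F] H)).toLinearMap
        ∘ₗ rTensor (A ⊗[F] H) QH.delta
      = (TensorProduct.lid F H).toLinearMap
          ∘ₗ rTensor H (tensorEps F QH.eps QA.eps)
          ∘ₗ (TensorProduct.assoc F H A H).symm.toLinearMap)
  -- (d6)
  ∧ (QH.mu ∘ₗ TensorProduct.map φH QH.mu
        ∘ₗ (TensorProduct.assoc F H A (H ⊗[F] H)).symm.toLinearMap
        ∘ₗ lTensor H (TensorProduct.assoc F A H H).toLinearMap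
        ∘ₗ lTensor H (rTensor H (mpPsi F QA QH φA φH))
        ∘ₗ lTensor H (TensorProduct.assoc F H A H).symm.toLinearMap
        ∘ₗ (TensorProduct.assoc F H H (A ⊗[F] H)).toLinearMap
        ∘ₗ rTensor (A ⊗[F] H) (lTensor H QH.lam ∘ₗ QH.delta)
      = (TensorProduct.lid F H).toLinearMap
          ∘ₗ rTensor H (tensorEps F QH.eps QA.eps)
          ∘ₗ (TensorProduct.assoc F H A H).symm.toLinearMap)
  -- (d7)
  ∧ (φH ∘ₗ rTensor A QH.mu ∘ₗ TensorProduct.map (lTensor H QH.lam) QA.lam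
      = QH.mu ∘ₗ rTensor H φH ∘ₗ (TensorProduct.assoc F H A H).symm.toLinearMap
          ∘ₗ lTensor H (mpPsi F QA QH φA φH ∘ₗ TensorProduct.map QH.lam QA.lam)
          ∘ₗ (TensorProduct.assoc F H H A).toLinearMap)
  -- (d8)
  ∧ (QA.mu ∘ₗ TensorProduct.map QA.mu φA
        ∘ₗ (TensorProduct.assoc F A A (H ⊗[F] A)).symm.toLinearMap
        ∘ₗ lTensor A (TensorProduct.assoc F A H A).toLinearMap
        ∘ₗ lTensor A (TensorProduct.map (mpPsi F QA QH φA φH) QA.lam)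
        ∘ₗ lTensor A (TensorProduct.assoc F H A A).symm.toLinearMap
        ∘ₗ (TensorProduct.assoc F A H (A ⊗[F] A)).toLinearMap
        ∘ₗ lTensor (A ⊗[F] H) QA.delta
      = (TensorProduct.rid F A).toLinearMap
          ∘ₗ lTensor A (tensorEps F QH.eps QA.eps)
          ∘ₗ (TensorProduct.assoc F A H A).toLinearMap)
  -- (d9)
  ∧ (QA.mu ∘ₗ TensorProduct.map QA.mu φA
        ∘ₗ (TensorProduct.assoc F A A (H ⊗[F] A)).symm.toLinearMap
        ∘ₗ lTensor A (TensorProduct.assoc F A H A).toLinearMap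
        ∘ₗ lTensor A (rTensor A (mpPsi F QA QH φA φH))
        ∘ₗ lTensor A (TensorProduct.assoc F H A A).symm.toLinearMap
        ∘ₗ (TensorProduct.assoc F A H (A ⊗[F] A)).toLinearMap
        ∘ₗ lTensor (A ⊗[F] H) (rTensor A QA.lam ∘ₗ QA.delta)
      = (TensorProduct.rid F A).toLinearMap
          ∘ₗ lTensor A (tensorEps F QH.eps QA.eps)
          ∘ₗ (TensorProduct.assoc F A H A).toLinearMap)

end MPDefs

/-!
Because `ε_H` is unital, multiplicative and comultiplicative, `A⊗ε_H : A⊗H → A` is an action of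
`H` on `A` compatible with `ε_A` and `δ_A`. Composing with `Ψ`, each axiom of a left module
comonoid for `φ_A = (A⊗ε_H)∘Ψ` follows from the matching axiom of the comonoidal distributive law.
The multiplicativity of `Ψ` is only assumed after precomposing with antipodes, which can be
cancelled since the antipodes are surjective.
-/

namespace HopfQG

variable {F : Type u} [Field F] {H : Type u} [AddCommGroup H] [Module F H]

theorem lid_map_eps_eps_comp_delta (QH : HopfQG F H) :
    (TensorProduct.lid F F).toLinearMap ∘ₗ TensorProduct.map QH.eps QH.eps ∘ₗ QH.delta
      = QH.eps := by
  have hε : (TensorProduct.lid F F).toLinearMap ∘ₗ TensorProduct.map QH.eps QH.eps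
      = QH.eps ∘ₗ (TensorProduct.lid F H).toLinearMap ∘ₗ rTensor H QH.eps := by
    ext x y
    simp
  rw [← comp_assoc, hε, comp_assoc, comp_assoc, QH.counit_left, comp_id]

end HopfQG

section CounitAction

variable (F : Type u) [Field F] {H : Type u} [AddCommGroup H] [Module F H]
variable {A : Type u} [AddCommGroup A] [Module F A]

/-- For `e = ε_H` this is the map `A⊗ε_H` of the paper. -/
def counitAction (e : H →ₗ[F] F) : A ⊗[F] H →ₗ[F] A :=
  (TensorProduct.rid F A).toLinearMap ∘ₗ lTensor A e

variable {F}

@[simp]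
theorem counitAction_tmul (e : H →ₗ[F] F) (a : A) (h : H) :
    counitAction F e (a ⊗ₜ h) = e h • a := by
  simp [counitAction]

theorem counitAction_comp_lTensor_eta {e : H →ₗ[F] F} {η : F →ₗ[F] H}
    (he : e ∘ₗ η = LinearMap.id) :
    counitAction F e ∘ₗ lTensor A η ∘ₗ (TensorProduct.rid F A).symm.toLinearMap
      = LinearMap.id := by
  have h1 : e (η 1) = 1 := congr($he 1)
  ext a
  simp [h1]

theorem counitAction_comp_lTensor_mu {e : H →ₗ[F] F} {μ : H ⊗[F] H →ₗ[F] H}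
    (he : e ∘ₗ μ = (TensorProduct.lid F F).toLinearMap ∘ₗ TensorProduct.map e e) :
    counitAction F e ∘ₗ lTensor A μ ∘ₗ (TensorProduct.assoc F A H H).toLinearMap
      = counitAction F e ∘ₗ rTensor H (counitAction F (A := A) e) := by
  ext a h h'
  have hμ : e (μ (h ⊗ₜ h')) = e h * e h' := by simpa using congr($he (h ⊗ₜ h'))
  simp [hμ, smul_smul, mul_comm]

theorem counitAction_comp_rTensor_comp_assoc_symm {X : Type u} [AddCommGroup X] [Module F X]
    (e : H →ₗ[F] F) (f : X ⊗[F] A →ₗ[F] A) :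
    counitAction F e ∘ₗ rTensor H f ∘ₗ (TensorProduct.assoc F X A H).symm.toLinearMap
      = f ∘ₗ lTensor X (counitAction F e) := by
  ext x a h
  simp

theorem eps_comp_counitAction (εA : A →ₗ[F] F) (e : H →ₗ[F] F) :
    εA ∘ₗ counitAction F e = tensorEps F εA e := by
  ext a h
  simp [tensorEps, mul_comm]

theorem delta_comp_counitAction {e : H →ₗ[F] F} {δH : H →ₗ[F] H ⊗[F] H}
    (he : (TensorProduct.lid F F).toLinearMap ∘ₗ TensorProduct.map e e ∘ₗ δH = e)
    (δA : A →ₗ[F] A ⊗[F] A) :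
    δA ∘ₗ counitAction F e
      = TensorProduct.map (counitAction F e) (counitAction F e) ∘ₗ tensorDelta F δA δH := by
  have hmap : TensorProduct.map (counitAction F e) (counitAction F e)
        ∘ₗ (TensorProduct.tensorTensorTensorComm F A A H H).toLinearMap
      = (TensorProduct.rid F (A ⊗[F] A)).toLinearMap
        ∘ₗ lTensor (A ⊗[F] A) ((TensorProduct.lid F F).toLinearMap ∘ₗ TensorProduct.map e e) := by
    ext a₁ a₂ h₁ h₂
    simp [TensorProduct.smul_tmul', TensorProduct.tmul_smul, smul_smul, mul_comm]
  ext a h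
  have hδ : (TensorProduct.lid F F) (TensorProduct.map e e (δH h)) = e h := congr($he h)
  simpa [tensorDelta, hδ] using congr($hmap (δA a ⊗ₜ δH h)).symm

theorem counitAction_comp_mul_assoc {e : H →ₗ[F] F} {μ : H ⊗[F] H →ₗ[F] H}
    (he : e ∘ₗ μ = (TensorProduct.lid F F).toLinearMap ∘ₗ TensorProduct.map e e)
    {Ψ : H ⊗[F] A →ₗ[F] A ⊗[F] H}
    (hΨ : Ψ ∘ₗ rTensor A μ
      = lTensor A μ ∘ₗ (TensorProduct.assoc F A H H).toLinearMap
        ∘ₗ rTensor H Ψ ∘ₗ (TensorProduct.assoc F H A H).symm.toLinearMap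
        ∘ₗ lTensor H Ψ ∘ₗ (TensorProduct.assoc F H H A).toLinearMap) :
    (counitAction F e ∘ₗ Ψ) ∘ₗ lTensor H (counitAction F e ∘ₗ Ψ)
        ∘ₗ (TensorProduct.assoc F H H A).toLinearMap
      = (counitAction F e ∘ₗ Ψ) ∘ₗ rTensor A μ := by
  have hμ := counitAction_comp_lTensor_mu (A := A) he
  have hswap := counitAction_comp_rTensor_comp_assoc_symm e (counitAction F e ∘ₗ Ψ)
  rw [← comp_assoc] at hμ hswap
  calc (counitAction F e ∘ₗ Ψ) ∘ₗ lTensor H (counitAction F e ∘ₗ Ψ)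
        ∘ₗ (TensorProduct.assoc F H H A).toLinearMap
      = ((counitAction F e ∘ₗ Ψ) ∘ₗ lTensor H (counitAction F e))
          ∘ₗ lTensor H Ψ ∘ₗ (TensorProduct.assoc F H H A).toLinearMap := by
        rw [lTensor_comp]; rfl
    _ = ((counitAction F e ∘ₗ rTensor H (counitAction F e ∘ₗ Ψ))
          ∘ₗ (TensorProduct.assoc F H A H).symm.toLinearMap)
          ∘ₗ lTensor H Ψ ∘ₗ (TensorProduct.assoc F H H A).toLinearMap := by
        rw [hswap]
    _ = ((counitAction F e ∘ₗ lTensor A μ) ∘ₗ (TensorProduct.assoc F A H H).toLinearMap)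
          ∘ₗ rTensor H Ψ ∘ₗ (TensorProduct.assoc F H A H).symm.toLinearMap
          ∘ₗ lTensor H Ψ ∘ₗ (TensorProduct.assoc F H H A).toLinearMap := by
        rw [hμ, rTensor_comp]; rfl
    _ = (counitAction F e ∘ₗ Ψ) ∘ₗ rTensor A μ := by
        rw [comp_assoc _ Ψ, hΨ]; rfl

end CounitAction

theorem IsDistLaw.comp_rTensor_mu {F : Type u} [Field F] {H A : Type u}
    [AddCommGroup H] [Module F H] [AddCommGroup A] [Module F A]
    {QH : HopfQG F H} {QA : HopfQG F A} {Ψ : H ⊗[F] A →ₗ[F] A ⊗[F] H} (hΨ : IsDistLaw F QH QA Ψ)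
    (hlamH : Function.Surjective QH.lam) (hlamA : Function.Surjective QA.lam) :
    Ψ ∘ₗ rTensor A QH.mu
      = lTensor A QH.mu ∘ₗ (TensorProduct.assoc F A H H).toLinearMap
        ∘ₗ rTensor H Ψ ∘ₗ (TensorProduct.assoc F H A H).symm.toLinearMap
        ∘ₗ lTensor H Ψ ∘ₗ (TensorProduct.assoc F H H A).toLinearMap := by
  have hsurj : Function.Surjective (TensorProduct.map (lTensor H QH.lam) QA.lam) :=
    TensorProduct.map_surjective (lTensor_surjective H hlamH) hlamA
  refine (LinearMap.cancel_right hsurj).1 ?_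
  simpa only [comp_assoc] using hΨ.2.1

/-- for a comonoidal distributive law `Ψ` of `H` over `A` (with bijective
antipodes), `φ_A = (A⊗ε_H)∘Ψ` makes `A` a left `H`-module comonoid. -/
theorem stmt4_phiA_left_module_comonoid
    {F : Type u} [Field F] {H A : Type u}
    [AddCommGroup H] [Module F H] [AddCommGroup A] [Module F A]
    (QH : HopfQG F H) (QA : HopfQG F A)
    (hlamH : Function.Bijective QH.lam) (hlamA : Function.Bijective QA.lam)
    (Ψ : H ⊗[F] A →ₗ[F] A ⊗[F] H) (hΨ : IsComonoidalDL F QH QA Ψ) :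
    IsLeftModuleComonoid F QH QA
      ((TensorProduct.rid F A).toLinearMap ∘ₗ lTensor A QH.eps ∘ₗ Ψ) := by
  obtain ⟨hdist, hδ, hε⟩ := hΨ
  change IsLeftModuleComonoid F QH QA (counitAction F QH.eps ∘ₗ Ψ)
  refine ⟨?_, counitAction_comp_mul_assoc QH.eps_mu (hdist.comp_rTensor_mu hlamH.2 hlamA.2),
    ?_, ?_⟩
  · exact (congrArg (counitAction F QH.eps ∘ₗ ·) hdist.2.2.2).trans
      (counitAction_comp_lTensor_eta QH.eps_eta)
  · exact (congrArg (· ∘ₗ Ψ) (eps_comp_counitAction QA.eps QH.eps)).trans hε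
  · rw [← comp_assoc, delta_comp_counitAction QH.lid_map_eps_eps_comp_delta, comp_assoc, hδ,
      ← comp_assoc, ← TensorProduct.map_comp]
    rfl
end
end
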